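/- arXiv:2412.11630 — 11 statements merged into one kernel-verified Lean document; each statement's English description precedes it below -/
import Mathlib

section
/- Let λ > 0 and θ > 0, and suppose s* ∈ ℝᵐ satisfies the stopping condition ‖∇φ̃(s*) + λ‖g‖·s*‖ ≤ θ‖s*‖. Then ‖Rg‖ ≤ (L_φ + θ + λ‖g‖)·‖s*‖. -/
open RealInnerProductSpace

/-!
Since `∇φ̃(s) = ∇φ(Rx + s) - ∇φ(Rx) + Rg`, the vector `Rg` is the stopping residual
`∇φ̃(s*) + λ‖g‖ s*` minus the gradient increment `∇φ(Rx + s*) - ∇φ(Rx)` and minus `λ‖g‖ s*`;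
the three pieces are bounded by `θ‖s*‖`, `L_φ‖s*‖` and `λ‖g‖‖s*‖` respectively.
-/

theorem DifferentiableAt.hasGradientAt_comp_add_add_inner {F : Type*} [NormedAddCommGroup F]
    [InnerProductSpace ℝ F] [CompleteSpace F] {f : F → ℝ} {a s : F}
    (hf : DifferentiableAt ℝ f (a + s)) (v : F) :
    HasGradientAt (fun t => f (a + t) + ⟪v, t⟫) (gradient f (a + s) + v) s := by
  rw [hasGradientAt_iff_hasFDerivAt, map_add, gradient,
    (InnerProductSpace.toDual ℝ F).apply_symm_apply]
  exact ((hasFDerivAt_comp_add_left a).2 hf.hasFDerivAt).add (innerSL ℝ v).hasFDerivAt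

theorem norm_le_of_norm_increment_add_smul_le {E : Type*} [NormedAddCommGroup E]
    [NormedSpace ℝ E] {G : E → E} {a s w : E} {L θ c : ℝ} (hc : 0 ≤ c)
    (hG : ‖G (a + s) - G a‖ ≤ L * ‖s‖)
    (hstop : ‖G (a + s) - G a + w + c • s‖ ≤ θ * ‖s‖) :
    ‖w‖ ≤ (L + θ + c) * ‖s‖ := by
  set d := G (a + s) - G a
  have hw : w = (d + w + c • s) - d - c • s := by abel
  have hcs : ‖c • s‖ = c * ‖s‖ := by rw [norm_smul, Real.norm_of_nonneg hc]
  calc ‖w‖ = ‖(d + w + c • s) - d - c • s‖ := by rw [← hw]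
    _ ≤ ‖d + w + c • s‖ + ‖d‖ + ‖c • s‖ :=
        (norm_sub_le _ _).trans (add_le_add_left (norm_sub_le _ _) _)
    _ ≤ θ * ‖s‖ + L * ‖s‖ + c * ‖s‖ := by rw [hcs]; gcongr
    _ = (L + θ + c) * ‖s‖ := by ring

theorem stmt_2_general (n m : ℕ)
    (φ : EuclideanSpace ℝ (Fin m) → ℝ) (hφ : Differentiable ℝ φ)
    (Lφ : ℝ)
    (hLip : ∀ a b : EuclideanSpace ℝ (Fin m),
      ‖gradient φ a - gradient φ b‖ ≤ Lφ * ‖a - b‖)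
    (x g : EuclideanSpace ℝ (Fin n))
    (R : EuclideanSpace ℝ (Fin n) →ₗ[ℝ] EuclideanSpace ℝ (Fin m))
    (φt : EuclideanSpace ℝ (Fin m) → ℝ)
    (hφt : ∀ s, φt s = φ (R x + s) + ⟪R g - gradient φ (R x), s⟫)
    (lam θ : ℝ) (hlam : 0 < lam)
    (sstar : EuclideanSpace ℝ (Fin m))
    (hstop : ‖gradient φt sstar + (lam * ‖g‖) • sstar‖ ≤ θ * ‖sstar‖) :
    ‖R g‖ ≤ (Lφ + θ + lam * ‖g‖) * ‖sstar‖ := by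
  have hgrad : gradient φt sstar = gradient φ (R x + sstar) + (R g - gradient φ (R x)) := by
    rw [funext hφt]
    exact ((hφ _).hasGradientAt_comp_add_add_inner _).gradient
  refine norm_le_of_norm_increment_add_smul_le (G := gradient φ) (a := R x) (by positivity) ?_ ?_
  · simpa using hLip (R x + sstar) (R x)
  · have hresidual : gradient φ (R x + sstar) - gradient φ (R x) + R g + (lam * ‖g‖) • sstar
        = gradient φt sstar + (lam * ‖g‖) • sstar := by
      rw [hgrad]; abel
    rwa [hresidual]

/-- If `s*` satisfies the stopping condition
`‖∇φ̃(s*) + λ‖g‖·s*‖ ≤ θ‖s*‖`, then `‖Rg‖ ≤ (L_φ + θ + λ‖g‖)‖s*‖`. -/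
theorem stmt_2 (n m : ℕ) (hn : 0 < n) (hm : 0 < m)
    (φ : EuclideanSpace ℝ (Fin m) → ℝ) (hφ : Differentiable ℝ φ)
    (Lφ : ℝ) (hLφ : 0 < Lφ)
    (hLip : ∀ a b : EuclideanSpace ℝ (Fin m),
      ‖gradient φ a - gradient φ b‖ ≤ Lφ * ‖a - b‖)
    (x g : EuclideanSpace ℝ (Fin n))
    (R : EuclideanSpace ℝ (Fin n) →ₗ[ℝ] EuclideanSpace ℝ (Fin m))
    (φt : EuclideanSpace ℝ (Fin m) → ℝ)
    (hφt : ∀ s, φt s = φ (R x + s) + ⟪R g - gradient φ (R x), s⟫)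
    (lam θ : ℝ) (hlam : 0 < lam) (hθ : 0 < θ)
    (sstar : EuclideanSpace ℝ (Fin m))
    (hstop : ‖gradient φt sstar + (lam * ‖g‖) • sstar‖ ≤ θ * ‖sstar‖) :
    ‖R g‖ ≤ (Lφ + θ + lam * ‖g‖) * ‖sstar‖ :=
  stmt_2_general n m φ hφ Lφ hLip x g R φt hφt lam θ hlam sstar hstop
end

section
/- Let λ > 0 and κ_R > 0. Suppose ‖Rg‖ ≤ κ_R‖g‖, that s* ∈ ℝᵐ satisfies the decrease condition φ̃(s*) − φ̃(0) ≤ −(λ‖g‖/2)‖s*‖², and that λ‖g‖ ≥ 2L_φ. Then ‖s*‖ ≤ 4κ_R/λ. -/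
/-!
The descent lemma for a gradient that is `L`-Lipschitz gives
`φ̃(s) - φ̃(0) ≥ ⟪Rg, s⟫ - (L/2)‖s‖² ≥ -κ_R‖g‖‖s‖ - (L/2)‖s‖²`. Together with the decrease
condition and `L ≤ λ‖g‖/2` this yields `(λ‖g‖/4)‖s*‖² ≤ κ_R‖g‖‖s*‖`; dividing by `‖g‖‖s*‖`
gives the bound.
-/

open RealInnerProductSpace

section Descent

variable {E : Type*} [NormedAddCommGroup E] [InnerProductSpace ℝ E] [CompleteSpace E]
  {φ : E → ℝ} {L : ℝ}

theorem inner_gradient_sub_le_of_lipschitz_gradient (hφ : Differentiable ℝ φ)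
    (hLip : ∀ a b : E, ‖gradient φ a - gradient φ b‖ ≤ L * ‖a - b‖) (a s : E) :
    ⟪gradient φ a, s⟫ - L / 2 * ‖s‖ ^ 2 ≤ φ (a + s) - φ a := by
  -- The Lipschitz bound makes `h' t ≥ 0` for `t ≥ 0`, so `h 1 ≥ h 0`.
  set h : ℝ → ℝ := fun t ↦ φ (a + t • s) - t * ⟪gradient φ a, s⟫ + L / 2 * t ^ 2 * ‖s‖ ^ 2
  have hderiv : ∀ t, HasDerivAt h
      (⟪gradient φ (a + t • s), s⟫ - ⟪gradient φ a, s⟫ + L * t * ‖s‖ ^ 2) t := by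
    intro t
    have hline : HasDerivAt (fun t : ℝ ↦ a + t • s) s t := by
      simpa using ((hasDerivAt_id t).smul_const s).const_add a
    have hφline : HasDerivAt (fun t : ℝ ↦ φ (a + t • s)) ⟪gradient φ (a + t • s), s⟫ t := by
      rw [inner_gradient_left]
      exact (hφ (a + t • s)).hasFDerivAt.comp_hasDerivAt t hline
    refine ((hφline.sub ((hasDerivAt_id t).mul_const _)).add
      (((hasDerivAt_pow 2 t).const_mul (L / 2)).mul_const _)).congr_deriv ?_
    simp only [Nat.cast_ofNat]
    ring
  have hderiv_nonneg : ∀ t, 0 ≤ t →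
      0 ≤ ⟪gradient φ (a + t • s), s⟫ - ⟪gradient φ a, s⟫ + L * t * ‖s‖ ^ 2 := by
    intro t ht
    have hcs : ⟪gradient φ a - gradient φ (a + t • s), s⟫
        ≤ ‖gradient φ a - gradient φ (a + t • s)‖ * ‖s‖ := real_inner_le_norm _ _
    have hlip : ‖gradient φ a - gradient φ (a + t • s)‖ ≤ L * (t * ‖s‖) := by
      simpa [norm_smul, abs_of_nonneg ht] using hLip a (a + t • s)
    rw [inner_sub_left] at hcs
    nlinarith [mul_le_mul_of_nonneg_right hlip (norm_nonneg s)]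
  have hmono : MonotoneOn h (Set.Ici 0) :=
    monotoneOn_of_hasDerivWithinAt_nonneg (convex_Ici 0)
      (fun t _ ↦ (hderiv t).continuousAt.continuousWithinAt)
      (fun t _ ↦ (hderiv t).hasDerivWithinAt)
      (fun t ht ↦ hderiv_nonneg t (le_of_lt (by simpa using ht)))
  have := hmono Set.self_mem_Ici (Set.mem_Ici.mpr zero_le_one) zero_le_one
  norm_num [h] at this ⊢
  linarith

theorem inner_sub_le_sub_of_lipschitz_gradient (hφ : Differentiable ℝ φ)
    (hLip : ∀ a b : E, ‖gradient φ a - gradient φ b‖ ≤ L * ‖a - b‖) {a v : E} {φt : E → ℝ}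
    (hφt : ∀ s, φt s = φ (a + s) + ⟪v - gradient φ a, s⟫) (s : E) :
    ⟪v, s⟫ - L / 2 * ‖s‖ ^ 2 ≤ φt s - φt 0 := by
  have hdescent := inner_gradient_sub_le_of_lipschitz_gradient hφ hLip a s
  rw [hφt, hφt, inner_sub_left, add_zero, inner_zero_right, add_zero]
  linarith

end Descent

lemma le_div_of_mul_sq_le_mul {a b r : ℝ} (ha : 0 < a) (hb : 0 ≤ b) (hr : 0 ≤ r)
    (h : a * r ^ 2 ≤ b * r) : r ≤ b / a := by
  rw [le_div_iff₀ ha]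
  rcases hr.eq_or_lt with rfl | hr
  · simpa using hb
  · exact le_of_mul_le_mul_right (by nlinarith) hr

theorem stmt_4_general (n m : ℕ)
    (φ : EuclideanSpace ℝ (Fin m) → ℝ) (hφ : Differentiable ℝ φ)
    (Lφ : ℝ) (hLφ : 0 < Lφ)
    (hLip : ∀ a b : EuclideanSpace ℝ (Fin m),
      ‖gradient φ a - gradient φ b‖ ≤ Lφ * ‖a - b‖)
    (x g : EuclideanSpace ℝ (Fin n))
    (R : EuclideanSpace ℝ (Fin n) →ₗ[ℝ] EuclideanSpace ℝ (Fin m))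
    (φt : EuclideanSpace ℝ (Fin m) → ℝ)
    (hφt : ∀ s, φt s = φ (R x + s) + ⟪R g - gradient φ (R x), s⟫)
    (lam κR : ℝ)
    (hRbound : ‖R g‖ ≤ κR * ‖g‖)
    (sstar : EuclideanSpace ℝ (Fin m))
    (hdecr : φt sstar - φt 0 ≤ -(lam * ‖g‖ / 2) * ‖sstar‖ ^ 2)
    (hbig : lam * ‖g‖ ≥ 2 * Lφ) :
    ‖sstar‖ ≤ 4 * κR / lam := by
  have hg : 0 < ‖g‖ := (norm_nonneg g).lt_of_ne fun h ↦ by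
    rw [← h, mul_zero] at hbig
    linarith
  have hlam : 0 < lam := pos_of_mul_pos_left (by linarith) hg.le
  have hκR : 0 ≤ κR := nonneg_of_mul_nonneg_left ((norm_nonneg _).trans hRbound) hg
  have hmodel := inner_sub_le_sub_of_lipschitz_gradient hφ hLip hφt sstar
  have hcs : -(‖R g‖ * ‖sstar‖) ≤ ⟪R g, sstar⟫ := (abs_le.mp (abs_real_inner_le_norm _ _)).1
  have hRs := mul_le_mul_of_nonneg_right hRbound (norm_nonneg sstar)
  have hquad : ‖g‖ * (lam * ‖sstar‖ ^ 2) ≤ ‖g‖ * (4 * κR * ‖sstar‖) := by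
    nlinarith [sq_nonneg ‖sstar‖]
  exact le_div_of_mul_sq_le_mul hlam (by positivity) (norm_nonneg _)
    (le_of_mul_le_mul_left hquad hg)

/-- Upper bound on the coarse step size:
if `‖Rg‖ ≤ κ_R‖g‖`, the decrease condition holds and `λ‖g‖ ≥ 2L_φ`,
then `‖s*‖ ≤ 4κ_R/λ`. -/
theorem stmt_4 (n m : ℕ) (hn : 0 < n) (hm : 0 < m)
    (φ : EuclideanSpace ℝ (Fin m) → ℝ) (hφ : Differentiable ℝ φ)
    (Lφ : ℝ) (hLφ : 0 < Lφ)
    (hLip : ∀ a b : EuclideanSpace ℝ (Fin m),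
      ‖gradient φ a - gradient φ b‖ ≤ Lφ * ‖a - b‖)
    (x g : EuclideanSpace ℝ (Fin n))
    (R : EuclideanSpace ℝ (Fin n) →ₗ[ℝ] EuclideanSpace ℝ (Fin m))
    (φt : EuclideanSpace ℝ (Fin m) → ℝ)
    (hφt : ∀ s, φt s = φ (R x + s) + ⟪R g - gradient φ (R x), s⟫)
    (lam κR : ℝ) (hlam : 0 < lam) (hκR : 0 < κR)
    (hRbound : ‖R g‖ ≤ κR * ‖g‖)
    (sstar : EuclideanSpace ℝ (Fin m))
    (hdecr : φt sstar - φt 0 ≤ -(lam * ‖g‖ / 2) * ‖sstar‖ ^ 2)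
    (hbig : lam * ‖g‖ ≥ 2 * Lφ) :
    ‖sstar‖ ≤ 4 * κR / lam :=
  stmt_4_general n m φ hφ Lφ hLφ hLip x g R φt hφt lam κR hRbound sstar hdecr hbig
end

section
/- Let f : ℝⁿ → ℝ, x ∈ ℝⁿ, g ∈ ℝⁿ with g ≠ 0, λ > 0, κ_f > 0 and f_k ∈ ℝ, and set s = −g/(λ‖g‖) (the fine regularized gradient step). Assume the linear model m(y) = f_k + ⟨g, y − x⟩ is accurate at the two points, i.e. |f(x) − f_k| ≤ κ_f/λ² and |f(x + s) − (f_k + ⟨g, s⟩)| ≤ κ_f/λ², and that λ‖g‖ ≥ 4κ_f. Then f(x + s) − f(x) ≤ −(1/2)·‖g‖/λ. -/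
/-!
Along `s` the linear model predicts the decrease `⟪g, s⟫ = -‖g‖/λ`. Comparing `f` with the model at
`x` and at `x + s` costs at most `2κ_f/λ²`, and `λ‖g‖ ≥ 4κ_f` makes this at most half the predicted
decrease.
-/

open RealInnerProductSpace

theorem real_inner_neg_div_smul_self {E : Type*} [NormedAddCommGroup E] [InnerProductSpace ℝ E]
    (g : E) (lam : ℝ) : ⟪g, -(1 / (lam * ‖g‖)) • g⟫ = -(‖g‖ / lam) := by
  rw [real_inner_smul_right, real_inner_self_eq_norm_sq]
  rcases eq_or_ne ‖g‖ 0 with hg | hg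
  · simp [hg]
  · field_simp

theorem sub_le_of_abs_sub_le_of_abs_sub_add_le {a b m d ε : ℝ} (ha : |a - m| ≤ ε)
    (hb : |b - (m + d)| ≤ ε) : b - a ≤ d + 2 * ε := by
  linarith [(abs_le.mp ha).1, (abs_le.mp hb).2]

theorem two_mul_div_sq_le_half_mul_div {κ lam a : ℝ} (h : 4 * κ ≤ lam * a) :
    2 * (κ / lam ^ 2) ≤ 1 / 2 * (a / lam) := by
  rcases eq_or_ne lam 0 with hlam | hlam
  · simp [hlam]
  · have half_eq : 1 / 2 * (a / lam) = lam * a / 2 / lam ^ 2 := by field_simp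
    rw [half_eq, ← mul_div_assoc]
    gcongr
    linarith

theorem stmt_5_general (n : ℕ)
    (f : EuclideanSpace ℝ (Fin n) → ℝ)
    (x g : EuclideanSpace ℝ (Fin n))
    (lam κf fk : ℝ)
    (s : EuclideanSpace ℝ (Fin n)) (hs : s = -(1 / (lam * ‖g‖)) • g)
    (hacc0 : |f x - fk| ≤ κf / lam ^ 2)
    (haccs : |f (x + s) - (fk + ⟪g, s⟫)| ≤ κf / lam ^ 2)
    (hbig : lam * ‖g‖ ≥ 4 * κf) :
    f (x + s) - f x ≤ -(1 / 2) * (‖g‖ / lam) := by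
  have model_decrease : ⟪g, s⟫ = -(‖g‖ / lam) := hs ▸ real_inner_neg_div_smul_self g lam
  calc f (x + s) - f x ≤ ⟪g, s⟫ + 2 * (κf / lam ^ 2) :=
        sub_le_of_abs_sub_le_of_abs_sub_add_le hacc0 haccs
    _ ≤ -(1 / 2) * (‖g‖ / lam) := by
        linarith [two_mul_div_sq_le_half_mul_div hbig]

/-- Decrease of `f` along the fine regularized gradient step
`s = −g/(λ‖g‖)` under fully-linear model accuracy and `λ‖g‖ ≥ 4κ_f`. -/
theorem stmt_5 (n : ℕ) (hn : 0 < n)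
    (f : EuclideanSpace ℝ (Fin n) → ℝ)
    (x g : EuclideanSpace ℝ (Fin n)) (hg : g ≠ 0)
    (lam κf fk : ℝ) (hlam : 0 < lam) (hκf : 0 < κf)
    (s : EuclideanSpace ℝ (Fin n)) (hs : s = -(1 / (lam * ‖g‖)) • g)
    (hacc0 : |f x - fk| ≤ κf / lam ^ 2)
    (haccs : |f (x + s) - (fk + ⟪g, s⟫)| ≤ κf / lam ^ 2)
    (hbig : lam * ‖g‖ ≥ 4 * κf) :
    f (x + s) - f x ≤ -(1 / 2) * (‖g‖ / lam) :=
  stmt_5_general n f x g lam κf fk s hs hacc0 haccs hbig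
end

section
/- Let f : ℝⁿ → ℝ, λ > 0, κ_f > 0 and f_k ∈ ℝ. Let s* ∈ ℝᵐ satisfy the decrease condition φ̃(s*) − φ̃(0) ≤ −(λ‖g‖/2)‖s*‖², and let s_k ∈ ℝⁿ satisfy the compatibility condition ⟨g, s_k⟩ = ⟨Rg, s*⟩. Assume the linear model m(y) = f_k + ⟨g, y − x⟩ is accurate at the two points, i.e. |f(x) − f_k| ≤ κ_f/λ² and |f(x + s_k) − (f_k + ⟨g, s_k⟩)| ≤ κ_f/λ². Then f(x + s_k) − f(x) ≤ 2κ_f/λ² + ((L_φ − λ‖g‖)/2)·‖s*‖². -/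
/-!
The Lipschitz gradient gives the lower half of the descent lemma,
`φ (a + v) - φ a ≥ ⟪∇φ a, v⟫ - L/2 ‖v‖²`. The correction term of the coarse model is chosen
so that its gradient at `0` is `R g`, hence the same bound holds for `φ̃` with `⟪R g, s⟫` in
place of `⟪∇φ a, v⟫`. Together with the decrease condition this bounds `⟪R g, s*⟫ = ⟪g, s_k⟫`
by `(L_φ - λ‖g‖)/2 ‖s*‖²`, and the two accuracy estimates transfer the linear model's
decrease `⟪g, s_k⟫` to `f` at the cost of `2κ_f/λ²`.
-/

open RealInnerProductSpace

section DescentLemma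

variable {E : Type*} [NormedAddCommGroup E] [InnerProductSpace ℝ E] [CompleteSpace E]
  {φ : E → ℝ} {L : ℝ}

theorem HasGradientAt.hasDerivAt_comp_add_smul {φ' a v : E} {t : ℝ}
    (h : HasGradientAt φ φ' (a + t • v)) :
    HasDerivAt (fun s : ℝ => φ (a + s • v)) ⟪φ', v⟫ t := by
  have hline : HasDerivAt (fun s : ℝ => a + s • v) v t := by
    simpa using ((hasDerivAt_id t).smul_const v).const_add a
  simpa [Function.comp_def] using h.hasFDerivAt.comp_hasDerivAt t hline

theorem inner_gradient_sub_gradient_le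
    (hLip : ∀ a b : E, ‖gradient φ a - gradient φ b‖ ≤ L * ‖a - b‖)
    (a v : E) {t : ℝ} (ht : 0 ≤ t) :
    ⟪gradient φ a - gradient φ (a + t • v), v⟫ ≤ L * t * ‖v‖ ^ 2 :=
  calc ⟪gradient φ a - gradient φ (a + t • v), v⟫
      ≤ ‖gradient φ a - gradient φ (a + t • v)‖ * ‖v‖ := real_inner_le_norm _ _
    _ ≤ L * ‖a - (a + t • v)‖ * ‖v‖ := by gcongr; exact hLip _ _
    _ = L * t * ‖v‖ ^ 2 := by
      rw [sub_add_cancel_left, norm_neg, norm_smul, Real.norm_of_nonneg ht]; ring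

theorem inner_gradient_sub_le_sub (hφ : Differentiable ℝ φ)
    (hLip : ∀ a b : E, ‖gradient φ a - gradient φ b‖ ≤ L * ‖a - b‖) (a v : E) :
    ⟪gradient φ a, v⟫ - L / 2 * ‖v‖ ^ 2 ≤ φ (a + v) - φ a := by
  -- `ψ' t ≥ 0` is exactly the Lipschitz bound between `a` and `a + t • v`.
  set ψ : ℝ → ℝ := fun t => φ (a + t • v) - t * ⟪gradient φ a, v⟫ + L / 2 * t ^ 2 * ‖v‖ ^ 2
  have hψ : ∀ t, HasDerivAt ψ
      (⟪gradient φ (a + t • v), v⟫ - ⟪gradient φ a, v⟫ + L * t * ‖v‖ ^ 2) t := by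
    intro t
    have hquad := ((hasDerivAt_pow 2 t).const_mul (L / 2)).mul_const (‖v‖ ^ 2)
    refine (((hφ _).hasGradientAt.hasDerivAt_comp_add_smul.sub
      ((hasDerivAt_id t).mul_const ⟪gradient φ a, v⟫)).add hquad).congr_deriv ?_
    simp only [Nat.cast_ofNat]
    ring
  have hmono : MonotoneOn ψ (Set.Ici 0) := by
    refine monotoneOn_of_hasDerivWithinAt_nonneg (convex_Ici 0)
      (fun t _ => (hψ t).continuousAt.continuousWithinAt)
      (fun t _ => (hψ t).hasDerivWithinAt) fun t ht => ?_
    rw [interior_Ici] at ht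
    have := inner_gradient_sub_gradient_le hLip a v ht.le
    rw [inner_sub_left] at this
    linarith
  have h01 := hmono Set.self_mem_Ici (Set.mem_Ici.2 zero_le_one) zero_le_one
  simp only [ψ, zero_smul, add_zero, zero_mul, one_smul, one_mul, one_pow, sub_zero,
    ne_eq, OfNat.ofNat_ne_zero, not_false_eq_true, zero_pow, mul_zero] at h01
  linarith

end DescentLemma

theorem stmt_6_general (n m : ℕ)
    (φ : EuclideanSpace ℝ (Fin m) → ℝ) (hφ : Differentiable ℝ φ)
    (Lφ : ℝ)
    (hLip : ∀ a b : EuclideanSpace ℝ (Fin m),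
      ‖gradient φ a - gradient φ b‖ ≤ Lφ * ‖a - b‖)
    (x g : EuclideanSpace ℝ (Fin n))
    (R : EuclideanSpace ℝ (Fin n) →ₗ[ℝ] EuclideanSpace ℝ (Fin m))
    (φt : EuclideanSpace ℝ (Fin m) → ℝ)
    (hφt : ∀ s, φt s = φ (R x + s) + ⟪R g - gradient φ (R x), s⟫)
    (f : EuclideanSpace ℝ (Fin n) → ℝ)
    (lam κf fk : ℝ)
    (sstar : EuclideanSpace ℝ (Fin m))
    (hdecr : φt sstar - φt 0 ≤ -(lam * ‖g‖ / 2) * ‖sstar‖ ^ 2)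
    (sk : EuclideanSpace ℝ (Fin n))
    (hcompat : ⟪g, sk⟫ = ⟪R g, sstar⟫)
    (hacc0 : |f x - fk| ≤ κf / lam ^ 2)
    (haccs : |f (x + sk) - (fk + ⟪g, sk⟫)| ≤ κf / lam ^ 2) :
    f (x + sk) - f x ≤ 2 * κf / lam ^ 2 + (Lφ - lam * ‖g‖) / 2 * ‖sstar‖ ^ 2 := by
  have hcoarse : ⟪R g, sstar⟫ - Lφ / 2 * ‖sstar‖ ^ 2 ≤ φt sstar - φt 0 := by
    have := inner_gradient_sub_le_sub hφ hLip (R x) sstar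
    rw [hφt, hφt, inner_sub_left, inner_zero_right, add_zero, add_zero]
    linarith
  have hinner : ⟪g, sk⟫ ≤ (Lφ - lam * ‖g‖) / 2 * ‖sstar‖ ^ 2 := by
    rw [hcompat]; linarith
  obtain ⟨hacc0, -⟩ := abs_le.1 hacc0
  obtain ⟨-, haccs⟩ := abs_le.1 haccs
  have : 2 * κf / lam ^ 2 = κf / lam ^ 2 + κf / lam ^ 2 := by ring
  linarith

/-- Decrease of `f` along a coarse step: with the decrease
condition on `s*`, the compatibility condition `⟪g, s_k⟫ = ⟪Rg, s*⟫` and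
fully-linear accuracy of the fine model at the two points,
`f(x+s_k) − f(x) ≤ 2κ_f/λ² + ((L_φ − λ‖g‖)/2)‖s*‖²`. -/
theorem stmt_6 (n m : ℕ) (hn : 0 < n) (hm : 0 < m)
    (φ : EuclideanSpace ℝ (Fin m) → ℝ) (hφ : Differentiable ℝ φ)
    (Lφ : ℝ) (hLφ : 0 < Lφ)
    (hLip : ∀ a b : EuclideanSpace ℝ (Fin m),
      ‖gradient φ a - gradient φ b‖ ≤ Lφ * ‖a - b‖)
    (x g : EuclideanSpace ℝ (Fin n))
    (R : EuclideanSpace ℝ (Fin n) →ₗ[ℝ] EuclideanSpace ℝ (Fin m))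
    (φt : EuclideanSpace ℝ (Fin m) → ℝ)
    (hφt : ∀ s, φt s = φ (R x + s) + ⟪R g - gradient φ (R x), s⟫)
    (f : EuclideanSpace ℝ (Fin n) → ℝ)
    (lam κf fk : ℝ) (hlam : 0 < lam) (hκf : 0 < κf)
    (sstar : EuclideanSpace ℝ (Fin m))
    (hdecr : φt sstar - φt 0 ≤ -(lam * ‖g‖ / 2) * ‖sstar‖ ^ 2)
    (sk : EuclideanSpace ℝ (Fin n))
    (hcompat : ⟪g, sk⟫ = ⟪R g, sstar⟫)
    (hacc0 : |f x - fk| ≤ κf / lam ^ 2)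
    (haccs : |f (x + sk) - (fk + ⟪g, sk⟫)| ≤ κf / lam ^ 2) :
    f (x + sk) - f x ≤ 2 * κf / lam ^ 2 + (Lφ - lam * ‖g‖) / 2 * ‖sstar‖ ^ 2 :=
  stmt_6_general n m φ hφ Lφ hLip x g R φt hφt f lam κf fk sstar hdecr sk hcompat hacc0 haccs
end

section
/- Let f : ℝⁿ → ℝ, λ > 0, θ > 0, κ_f > 0, κ_H ∈ (0,1] and f_k ∈ ℝ. Let s* ∈ ℝᵐ satisfy the stopping condition ‖∇φ̃(s*) + λ‖g‖·s*‖ ≤ θ‖s*‖ and the decrease condition φ̃(s*) − φ̃(0) ≤ −(λ‖g‖/2)‖s*‖², let the restriction condition ‖Rg‖ ≥ κ_H‖g‖ hold, and let s_k ∈ ℝⁿ satisfy the compatibility condition ⟨g, s_k⟩ = ⟨Rg, s*⟩. Assume the linear model m(y) = f_k + ⟨g, y − x⟩ is accurate at the two points, i.e. |f(x) − f_k| ≤ κ_f/λ² and |f(x + s_k) − (f_k + ⟨g, s_k⟩)| ≤ κ_f/λ², and that λ‖g‖ ≥ max{L_φ + θ, 64κ_f/κ_H², 2L_φ}. Then f(x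 + s_k) − f(x) ≤ −(κ_H²/32)·‖g‖/λ. -/
/-!
The corrected coarse model `φ̃` has gradient `Rg` at `0` and inherits the `L_φ`-Lipschitz
gradient of `φ`. The stopping condition and the triangle inequality give
`κ_H ‖g‖ ≤ ‖∇φ̃(0)‖ ≤ (θ + L_φ + λ‖g‖)‖s*‖ ≤ 2λ‖g‖‖s*‖`, so `‖s*‖ ≥ κ_H / (2λ)`.
The quadratic lower bound for functions with Lipschitz gradient, combined with the decrease
condition, gives `⟨Rg, s*⟩ ≤ -(λ‖g‖ - L_φ)/2 ‖s*‖² ≤ -(λ‖g‖/4)‖s*‖² ≤ -κ_H²‖g‖/(16λ)`.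
By compatibility this is the decrease `⟨g, s_k⟩` of the linear model, and the accuracy of that
model costs at most `2κ_f/λ² ≤ κ_H²‖g‖/(32λ)`.
-/

open RealInnerProductSpace

variable {E : Type*} [NormedAddCommGroup E] [InnerProductSpace ℝ E] [CompleteSpace E]

theorem le_image_add_of_gradient_lipschitz {F : E → ℝ} (hF : Differentiable ℝ F) {L : ℝ}
    (hLip : ∀ a b, ‖gradient F a - gradient F b‖ ≤ L * ‖a - b‖) (a v : E) :
    F a + ⟪gradient F a, v⟫ - L / 2 * ‖v‖ ^ 2 ≤ F (a + v) := by
  set h : ℝ → ℝ := fun t => F (a + t • v) - t * ⟪gradient F a, v⟫ + L / 2 * ‖v‖ ^ 2 * t ^ 2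
  have hderiv (t : ℝ) : HasDerivAt h
      (⟪gradient F (a + t • v) - gradient F a, v⟫ + L * ‖v‖ ^ 2 * t) t := by
    have hline : HasDerivAt (fun t : ℝ => a + t • v) v t := by
      simpa using ((hasDerivAt_id t).smul_const v).const_add a
    have hF_line := (hF (a + t • v)).hasFDerivAt.comp_hasDerivAt t hline
    rw [← inner_gradient_left] at hF_line
    refine ((hF_line.sub ((hasDerivAt_id t).mul_const _)).add
      (((hasDerivAt_id t).pow 2).const_mul (L / 2 * ‖v‖ ^ 2))).congr_deriv ?_
    rw [inner_sub_left]
    simp only [id, Nat.cast_ofNat]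
    ring
  have hmono : MonotoneOn h (Set.Icc 0 1) := by
    refine monotoneOn_of_hasDerivWithinAt_nonneg (convex_Icc 0 1)
      (fun t _ => (hderiv t).continuousAt.continuousWithinAt)
      (fun t _ => (hderiv t).hasDerivWithinAt) fun t ht => ?_
    rw [interior_Icc] at ht
    have hgrad_diff : ‖gradient F (a + t • v) - gradient F a‖ ≤ L * (t * ‖v‖) := by
      simpa [norm_smul, abs_of_pos ht.1] using hLip (a + t • v) a
    have := (abs_le.mp (abs_real_inner_le_norm
      (gradient F (a + t • v) - gradient F a) v)).1
    nlinarith [norm_nonneg v]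
  have := hmono (by simp) (by simp) zero_le_one
  simp only [h, zero_smul, add_zero, one_smul, zero_mul, sub_zero, one_mul, ne_eq,
    OfNat.ofNat_ne_zero, not_false_eq_true, zero_pow, mul_zero, one_pow, mul_one] at this
  linarith

theorem norm_gradient_zero_le_of_stopping {F : E → ℝ} {L C θ : ℝ}
    (hLip : ∀ a b, ‖gradient F a - gradient F b‖ ≤ L * ‖a - b‖) (hC : 0 ≤ C) {s : E}
    (hstop : ‖gradient F s + C • s‖ ≤ θ * ‖s‖) :
    ‖gradient F 0‖ ≤ (θ + L + C) * ‖s‖ := by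
  calc ‖gradient F 0‖
      = ‖(gradient F s + C • s) + (gradient F 0 - gradient F s) - C • s‖ := by
        congr 1; abel
    _ ≤ ‖gradient F s + C • s‖ + ‖gradient F 0 - gradient F s‖ + ‖C • s‖ :=
        (norm_sub_le _ _).trans (add_le_add_left (norm_add_le _ _) _)
    _ ≤ θ * ‖s‖ + L * ‖s‖ + C * ‖s‖ := by
        gcongr
        · simpa using hLip 0 s
        · rw [norm_smul, Real.norm_of_nonneg hC]
    _ = (θ + L + C) * ‖s‖ := by ring

theorem inner_gradient_zero_le_of_decrease {F : E → ℝ} (hF : Differentiable ℝ F) {L C : ℝ}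
    (hLip : ∀ a b, ‖gradient F a - gradient F b‖ ≤ L * ‖a - b‖) {s : E}
    (hdecr : F s - F 0 ≤ -(C / 2) * ‖s‖ ^ 2) :
    ⟪gradient F 0, s⟫ ≤ -((C - L) / 2) * ‖s‖ ^ 2 := by
  have := le_image_add_of_gradient_lipschitz hF hLip 0 s
  rw [zero_add] at this
  linarith

section CorrectedModel

variable {F Ft : E → ℝ} {a c : E}

theorem hasGradientAt_of_eq_add_inner_sub_gradient (hF : Differentiable ℝ F)
    (hFt : ∀ s, Ft s = F (a + s) + ⟪c - gradient F a, s⟫) (s : E) :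
    HasGradientAt Ft (gradient F (a + s) + (c - gradient F a)) s := by
  rw [funext hFt, hasGradientAt_iff_hasFDerivAt, map_add, toDual_gradient]
  exact ((hF _).hasFDerivAt.comp s ((hasFDerivAt_id s).const_add a)).add
    (innerSL ℝ _).hasFDerivAt

theorem gradient_zero_of_eq_add_inner_sub_gradient (hF : Differentiable ℝ F)
    (hFt : ∀ s, Ft s = F (a + s) + ⟪c - gradient F a, s⟫) : gradient Ft 0 = c := by
  rw [(hasGradientAt_of_eq_add_inner_sub_gradient hF hFt 0).gradient, add_zero,
    add_sub_cancel]

theorem gradient_lipschitz_of_eq_add_inner_sub_gradient (hF : Differentiable ℝ F)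
    (hFt : ∀ s, Ft s = F (a + s) + ⟪c - gradient F a, s⟫) {L : ℝ}
    (hLip : ∀ u v, ‖gradient F u - gradient F v‖ ≤ L * ‖u - v‖) (u v : E) :
    ‖gradient Ft u - gradient Ft v‖ ≤ L * ‖u - v‖ := by
  simpa only [(hasGradientAt_of_eq_add_inner_sub_gradient hF hFt _).gradient,
    add_sub_add_right_eq_sub, add_sub_add_left_eq_sub] using hLip (a + u) (a + v)

end CorrectedModel

theorem stmt_7_general (n m : ℕ)
    (φ : EuclideanSpace ℝ (Fin m) → ℝ) (hφ : Differentiable ℝ φ)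
    (Lφ : ℝ)
    (hLip : ∀ a b : EuclideanSpace ℝ (Fin m),
      ‖gradient φ a - gradient φ b‖ ≤ Lφ * ‖a - b‖)
    (x g : EuclideanSpace ℝ (Fin n))
    (R : EuclideanSpace ℝ (Fin n) →ₗ[ℝ] EuclideanSpace ℝ (Fin m))
    (φt : EuclideanSpace ℝ (Fin m) → ℝ)
    (hφt : ∀ s, φt s = φ (R x + s) + ⟪R g - gradient φ (R x), s⟫)
    (f : EuclideanSpace ℝ (Fin n) → ℝ)
    (lam θ κf κH fk : ℝ) (hlam : 0 < lam)
    (hκH : κH ∈ Set.Ioc (0 : ℝ) 1)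
    (sstar : EuclideanSpace ℝ (Fin m))
    (hstop : ‖gradient φt sstar + (lam * ‖g‖) • sstar‖ ≤ θ * ‖sstar‖)
    (hdecr : φt sstar - φt 0 ≤ -(lam * ‖g‖ / 2) * ‖sstar‖ ^ 2)
    (hrestr : ‖R g‖ ≥ κH * ‖g‖)
    (sk : EuclideanSpace ℝ (Fin n))
    (hcompat : ⟪g, sk⟫ = ⟪R g, sstar⟫)
    (hacc0 : |f x - fk| ≤ κf / lam ^ 2)
    (haccs : |f (x + sk) - (fk + ⟪g, sk⟫)| ≤ κf / lam ^ 2)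
    (hbig : lam * ‖g‖ ≥ max (max (Lφ + θ) (64 * κf / κH ^ 2)) (2 * Lφ)) :
    f (x + sk) - f x ≤ -(κH ^ 2 / 32) * (‖g‖ / lam) := by
  obtain ⟨hκH, -⟩ := hκH
  set C := lam * ‖g‖
  have hC : 0 ≤ C := by positivity
  obtain ⟨⟨hCθ, hCκ⟩, hCL⟩ : (Lφ + θ ≤ C ∧ 64 * κf / κH ^ 2 ≤ C) ∧ 2 * Lφ ≤ C := by
    simpa only [ge_iff_le, max_le_iff] using hbig
  have hLipt := gradient_lipschitz_of_eq_add_inner_sub_gradient hφ hφt hLip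
  have hlen := norm_gradient_zero_le_of_stopping hLipt hC hstop
  have hinner := inner_gradient_zero_le_of_decrease
    (fun s => (hasGradientAt_of_eq_add_inner_sub_gradient hφ hφt s).differentiableAt) hLipt hdecr
  rw [gradient_zero_of_eq_add_inner_sub_gradient hφ hφt] at hlen hinner
  have hstep : κH * ‖g‖ ≤ 2 * lam * ‖g‖ * ‖sstar‖ := by nlinarith [norm_nonneg sstar]
  have hinner_quarter : ⟪R g, sstar⟫ ≤ -(C / 4) * ‖sstar‖ ^ 2 := by
    nlinarith [sq_nonneg ‖sstar‖]
  have hmodel_decrease : ⟪R g, sstar⟫ * (16 * lam) ≤ -(κH ^ 2 * ‖g‖) := by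
    nlinarith [mul_nonneg (sub_nonneg.2 hstep) (by positivity : 0 ≤ 2 * lam * ‖sstar‖ + κH)]
  have hκf : 2 * (κf / lam ^ 2) * (32 * lam) ≤ κH ^ 2 * ‖g‖ := by
    rw [div_le_iff₀ (by positivity)] at hCκ
    field_simp
    nlinarith
  have hgain : f (x + sk) - f x ≤ ⟪R g, sstar⟫ + 2 * (κf / lam ^ 2) := by
    linarith [abs_le.mp hacc0, abs_le.mp haccs]
  rw [show -(κH ^ 2 / 32) * (‖g‖ / lam) = -(κH ^ 2 * ‖g‖) / (32 * lam) by ring,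
    le_div_iff₀ (by positivity)]
  nlinarith [mul_le_mul_of_nonneg_right hgain (by positivity : (0 : ℝ) ≤ 32 * lam)]

/-- Guaranteed decrease of `f` along a coarse step:
under the stopping, decrease, restriction and compatibility conditions,
fully-linear accuracy, and `λ‖g‖ ≥ max{L_φ + θ, 64κ_f/κ_H², 2L_φ}`,
`f(x+s_k) − f(x) ≤ −(κ_H²/32)‖g‖/λ`. -/
theorem stmt_7 (n m : ℕ) (hn : 0 < n) (hm : 0 < m)
    (φ : EuclideanSpace ℝ (Fin m) → ℝ) (hφ : Differentiable ℝ φ)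
    (Lφ : ℝ) (hLφ : 0 < Lφ)
    (hLip : ∀ a b : EuclideanSpace ℝ (Fin m),
      ‖gradient φ a - gradient φ b‖ ≤ Lφ * ‖a - b‖)
    (x g : EuclideanSpace ℝ (Fin n))
    (R : EuclideanSpace ℝ (Fin n) →ₗ[ℝ] EuclideanSpace ℝ (Fin m))
    (φt : EuclideanSpace ℝ (Fin m) → ℝ)
    (hφt : ∀ s, φt s = φ (R x + s) + ⟪R g - gradient φ (R x), s⟫)
    (f : EuclideanSpace ℝ (Fin n) → ℝ)
    (lam θ κf κH fk : ℝ) (hlam : 0 < lam) (hθ : 0 < θ) (hκf : 0 < κf)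
    (hκH : κH ∈ Set.Ioc (0 : ℝ) 1)
    (sstar : EuclideanSpace ℝ (Fin m))
    (hstop : ‖gradient φt sstar + (lam * ‖g‖) • sstar‖ ≤ θ * ‖sstar‖)
    (hdecr : φt sstar - φt 0 ≤ -(lam * ‖g‖ / 2) * ‖sstar‖ ^ 2)
    (hrestr : ‖R g‖ ≥ κH * ‖g‖)
    (sk : EuclideanSpace ℝ (Fin n))
    (hcompat : ⟪g, sk⟫ = ⟪R g, sstar⟫)
    (hacc0 : |f x - fk| ≤ κf / lam ^ 2)
    (haccs : |f (x + sk) - (fk + ⟪g, sk⟫)| ≤ κf / lam ^ 2)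
    (hbig : lam * ‖g‖ ≥ max (max (Lφ + θ) (64 * κf / κH ^ 2)) (2 * Lφ)) :
    f (x + sk) - f x ≤ -(κH ^ 2 / 32) * (‖g‖ / lam) :=
  stmt_7_general n m φ hφ Lφ hLip x g R φt hφt f lam θ κf κH fk hlam hκH sstar hstop hdecr hrestr sk
    hcompat hacc0 haccs hbig
end

section
/- Let f : ℝⁿ → ℝ be differentiable, x ∈ ℝⁿ, g ∈ ℝⁿ, λ > 0, κ_f > 0, κ_g ≥ 0, θ > 0, L_φ > 0, κ_H ∈ (0,1] and f_k ∈ ℝ, and set s = −g/(λ‖g‖) (the fine regularized gradient step, assuming g ≠ 0). Assume the linear model m(y) = f_k + ⟨g, y − x⟩ is accurate at the two points, i.e. |f(x) − f_k| ≤ κ_f/λ² and |f(x + s) − (f_k + ⟨g, s⟩)| ≤ κ_f/λ², that the gradient estimate is accurate, i.e. ‖∇f(x) − g‖ ≤ κ_g/λ, and that λ‖∇f(x)‖ ≥ max{L_φ + θ + κ_g, 64κ_f/κ_H² + κ_g, 2L_φ + κ_g}. Then g ≠ 0 and f(x + s) − f(x) ≤ −C₁·‖∇f(x)‖/λ, where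 C₁ = (κ_H²/32)·max{(L_φ + θ)/(L_φ + θ + κ_g), 64κ_f/(64κ_f + κ_g·κ_H²), 2L_φ/(2L_φ + κ_g)}. -/
/-!
The step satisfies `⟪g, s⟫ = -‖g‖/λ`, so the two model-accuracy bounds give
`f (x + s) - f x ≤ -‖g‖/λ + 2κ_f/λ²`, and `λ‖g‖ ≥ λ‖∇f(x)‖ - κ_g`. With `A = λ‖∇f(x)‖` and
`t = κ_H²/32 ≤ 1/2` it remains to show `κ_g + 2κ_f ≤ (1 - t r) A` for the maximal ratio `r`.
Each ratio has the form `D/(D + κ_g)` with `D + κ_g ≤ A`, hence `r ≤ 1 - κ_g/A`, while the middle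
branch of the hypothesis on `A` says `2κ_f ≤ t (A - κ_g)`; these two facts give the bound.
-/

open RealInnerProductSpace

lemma div_add_le_one_sub_div {D κ A : ℝ} (hD : 0 < D) (hκ : 0 ≤ κ) (hA : D + κ ≤ A) :
    D / (D + κ) ≤ 1 - κ / A := by
  have hDκ : 0 < D + κ := by linarith
  calc D / (D + κ) = 1 - κ / (D + κ) := by field_simp; ring
    _ ≤ 1 - κ / A := by gcongr

lemma add_le_one_sub_mul_mul {t r κ ε A : ℝ} (ht : t ≤ 1 / 2) (hr0 : 0 ≤ r)
    (hr : r ≤ 1 - κ / A) (hA : 0 < A) (hε : ε ≤ t * (A - κ)) :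
    κ + ε ≤ (1 - t * r) * A := by
  have hκ : κ ≤ (1 - r) * A := by
    have := mul_le_mul_of_nonneg_right hr hA.le
    rw [sub_mul, div_mul_cancel₀ _ hA.ne'] at this
    linarith
  calc κ + ε ≤ (1 - t) * κ + t * A := by linarith
    _ ≤ (1 - t) * ((1 - r) * A) + t * A := by
      gcongr
      linarith
    _ = (1 - t * r) * A - r * (1 - 2 * t) * A := by ring
    _ ≤ (1 - t * r) * A :=
      sub_le_self _ (mul_nonneg (mul_nonneg hr0 (by linarith)) hA.le)

lemma inner_neg_div_smul_self {E : Type*} [NormedAddCommGroup E] [InnerProductSpace ℝ E]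
    (lam : ℝ) (g : E) : ⟪g, -(1 / (lam * ‖g‖)) • g⟫ = -(‖g‖ / lam) := by
  rw [real_inner_smul_right, real_inner_self_eq_norm_sq]
  rcases eq_or_ne ‖g‖ 0 with hg | hg
  · simp [hg]
  · field_simp

lemma sub_le_mul_norm_of_norm_sub_le {E : Type*} [SeminormedAddCommGroup E] {u v : E}
    {lam κ : ℝ} (hlam : 0 < lam) (h : ‖u - v‖ ≤ κ / lam) :
    lam * ‖u‖ - κ ≤ lam * ‖v‖ := by
  have := mul_le_mul_of_nonneg_left ((norm_sub_norm_le u v).trans h) hlam.le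
  rw [mul_div_cancel₀ _ hlam.ne'] at this
  linarith

lemma add_le_one_sub_mul_max_ratio {κf κg θ Lφ κH A : ℝ} (hκf : 0 < κf) (hκg : 0 ≤ κg)
    (hθ : 0 < θ) (hLφ : 0 < Lφ) (hκH0 : 0 < κH) (hκH1 : κH ≤ 1)
    (hA : max (max (Lφ + θ + κg) (64 * κf / κH ^ 2 + κg)) (2 * Lφ + κg) ≤ A) :
    κg + 2 * κf ≤
      (1 - κH ^ 2 / 32 *
        max (max ((Lφ + θ) / (Lφ + θ + κg)) (64 * κf / (64 * κf + κg * κH ^ 2)))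
          (2 * Lφ / (2 * Lφ + κg))) * A := by
  simp only [max_le_iff] at hA
  obtain ⟨⟨hA₁, hA₂⟩, hA₃⟩ := hA
  have hD₂ : 0 < 64 * κf / κH ^ 2 := by positivity
  have hr₂ : 64 * κf / (64 * κf + κg * κH ^ 2) = 64 * κf / κH ^ 2 / (64 * κf / κH ^ 2 + κg) := by
    field_simp
  have hr : max (max ((Lφ + θ) / (Lφ + θ + κg)) (64 * κf / (64 * κf + κg * κH ^ 2)))
      (2 * Lφ / (2 * Lφ + κg)) ≤ 1 - κg / A := max_le (max_le
    (div_add_le_one_sub_div (by positivity) hκg hA₁)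
    (hr₂ ▸ div_add_le_one_sub_div hD₂ hκg hA₂))
    (div_add_le_one_sub_div (by positivity) hκg hA₃)
  have hκf_le : 2 * κf ≤ κH ^ 2 / 32 * (A - κg) := by
    have := mul_le_mul_of_nonneg_left (le_sub_iff_add_le.mpr hA₂) (by positivity : 0 ≤ κH ^ 2 / 32)
    rwa [show κH ^ 2 / 32 * (64 * κf / κH ^ 2) = 2 * κf by field_simp; norm_num] at this
  exact add_le_one_sub_mul_mul (by nlinarith) (le_max_of_le_right (by positivity)) hr
    (by linarith) hκf_le

theorem stmt_9_general (n : ℕ)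
    (f : EuclideanSpace ℝ (Fin n) → ℝ)
    (x g : EuclideanSpace ℝ (Fin n))
    (lam κf κg θ Lφ κH fk : ℝ)
    (hlam : 0 < lam) (hκf : 0 < κf) (hκg : 0 ≤ κg) (hθ : 0 < θ) (hLφ : 0 < Lφ)
    (hκH : κH ∈ Set.Ioc (0 : ℝ) 1)
    (s : EuclideanSpace ℝ (Fin n)) (hs : s = -(1 / (lam * ‖g‖)) • g)
    (hacc0 : |f x - fk| ≤ κf / lam ^ 2)
    (haccs : |f (x + s) - (fk + ⟪g, s⟫)| ≤ κf / lam ^ 2)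
    (hgrad : ‖gradient f x - g‖ ≤ κg / lam)
    (hbig : lam * ‖gradient f x‖ ≥
      max (max (Lφ + θ + κg) (64 * κf / κH ^ 2 + κg)) (2 * Lφ + κg)) :
    g ≠ 0 ∧
      f (x + s) - f x ≤
        -(κH ^ 2 / 32 *
            max (max ((Lφ + θ) / (Lφ + θ + κg)) (64 * κf / (64 * κf + κg * κH ^ 2)))
              (2 * Lφ / (2 * Lφ + κg))) *
          (‖gradient f x‖ / lam) := by
  obtain ⟨hκH0, hκH1⟩ := hκH
  have hA₂ : 64 * κf / κH ^ 2 + κg ≤ lam * ‖gradient f x‖ :=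
    le_of_max_le_right (le_of_max_le_left hbig)
  have hD₂ : 0 < 64 * κf / κH ^ 2 := by positivity
  have hg : lam * ‖gradient f x‖ - κg ≤ lam * ‖g‖ := sub_le_mul_norm_of_norm_sub_le hlam hgrad
  have hg_ne : g ≠ 0 := by
    rintro rfl
    simp only [norm_zero, mul_zero] at hg
    linarith
  refine ⟨hg_ne, ?_⟩
  have hstep : f (x + s) - f x ≤ -(‖g‖ / lam) + 2 * (κf / lam ^ 2) := by
    rw [show ⟪g, s⟫ = -(‖g‖ / lam) from hs ▸ inner_neg_div_smul_self lam g] at haccs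
    linarith [(abs_le.mp hacc0).1, (abs_le.mp haccs).2]
  have hkey := add_le_one_sub_mul_max_ratio hκf hκg hθ hLφ hκH0 hκH1 hbig
  set r := max (max ((Lφ + θ) / (Lφ + θ + κg)) (64 * κf / (64 * κf + κg * κH ^ 2)))
    (2 * Lφ / (2 * Lφ + κg))
  calc f (x + s) - f x ≤ -(‖g‖ / lam) + 2 * (κf / lam ^ 2) := hstep
    _ = (-(lam * ‖g‖) + 2 * κf) / lam ^ 2 := by field_simp
    _ ≤ -(κH ^ 2 / 32 * r * (lam * ‖gradient f x‖)) / lam ^ 2 := by gcongr; linarith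
    _ = -(κH ^ 2 / 32 * r) * (‖gradient f x‖ / lam) := by field_simp

/-- Guaranteed decrease of `f` along the fine regularized
gradient step, stated in terms of the true gradient `∇f(x)`. -/
theorem stmt_9 (n : ℕ) (hn : 0 < n)
    (f : EuclideanSpace ℝ (Fin n) → ℝ) (hf : Differentiable ℝ f)
    (x g : EuclideanSpace ℝ (Fin n))
    (lam κf κg θ Lφ κH fk : ℝ)
    (hlam : 0 < lam) (hκf : 0 < κf) (hκg : 0 ≤ κg) (hθ : 0 < θ) (hLφ : 0 < Lφ)
    (hκH : κH ∈ Set.Ioc (0 : ℝ) 1)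
    (s : EuclideanSpace ℝ (Fin n)) (hs : s = -(1 / (lam * ‖g‖)) • g)
    (hacc0 : |f x - fk| ≤ κf / lam ^ 2)
    (haccs : |f (x + s) - (fk + ⟪g, s⟫)| ≤ κf / lam ^ 2)
    (hgrad : ‖gradient f x - g‖ ≤ κg / lam)
    (hbig : lam * ‖gradient f x‖ ≥
      max (max (Lφ + θ + κg) (64 * κf / κH ^ 2 + κg)) (2 * Lφ + κg)) :
    g ≠ 0 ∧
      f (x + s) - f x ≤
        -(κH ^ 2 / 32 *
            max (max ((Lφ + θ) / (Lφ + θ + κg)) (64 * κf / (64 * κf + κg * κH ^ 2)))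
              (2 * Lφ / (2 * Lφ + κg))) *
          (‖gradient f x‖ / lam) :=
  stmt_9_general n f x g lam κf κg θ Lφ κH fk hlam hκf hκg hθ hLφ hκH s hs hacc0 haccs hgrad hbig
end

section
/- Let f : ℝⁿ → ℝ, x, g ∈ ℝⁿ, λ > 0, θ > 0, L_φ > 0, κ_f > 0, κ_H ∈ (0,1], η₁ ∈ (0,1), η₂ > 0, ε_f ∈ (0, κ_f], and f_k, f_k^s ∈ ℝ; set s = −g/(λ‖g‖) (the fine regularized gradient step, assuming g ≠ 0) and D = ‖g‖/λ (the fine model decrease). Assume |f(x + s) − (f_k + ⟨g, s⟩)| ≤ κ_f/λ², that the estimate f_k^s is ε_f-accurate, i.e. |f_k^s − f(x + s)| ≤ ε_f/λ², and that λ‖g‖ ≥ max{L_φ + θ, η₂, (32κ_f/κ_H² + L_φ)/(1 − η₁)}. Then g ≠ 0, |（f_k − f_k^s) − D| ≤ (1 − η₁)·D, and in particular f_k − f_k^s ≥ η₁·D and λ‖g‖ ≥ η₂ (the iteration is successful). -/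
open RealInnerProductSpace

/- The regularized gradient step `s = -g/(λ‖g‖)` satisfies `⟪g, s⟫ = -‖g‖/λ`, so the linear model
predicts exactly the decrease `D`. Model error and estimation error are each at most `κ_f/λ²`, hence
`|(f_k - f_kˢ) - D| ≤ 2κ_f/λ²`, and the threshold on `λ‖g‖` (using `κ_H ≤ 1`) gives
`2κ_f ≤ (1 - η₁) λ‖g‖`, i.e. `2κ_f/λ² ≤ (1 - η₁) D`. -/

theorem inner_neg_smul_inv_mul_norm_self {E : Type*} [NormedAddCommGroup E] [InnerProductSpace ℝ E]
    {g : E} (hg : g ≠ 0) {lam : ℝ} (hlam : lam ≠ 0) :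
    ⟪g, -(1 / (lam * ‖g‖)) • g⟫ = -(‖g‖ / lam) := by
  have : ‖g‖ ≠ 0 := norm_ne_zero_iff.mpr hg
  rw [real_inner_smul_right, real_inner_self_eq_norm_sq]
  field_simp

theorem abs_sub_sub_le_of_abs_sub_le {fk fks fs D δ ε : ℝ}
    (hmodel : |fs - (fk - D)| ≤ δ) (hest : |fks - fs| ≤ ε) : |fk - fks - D| ≤ ε + δ := by
  obtain ⟨hm₁, hm₂⟩ := abs_le.mp hmodel
  obtain ⟨he₁, he₂⟩ := abs_le.mp hest
  exact abs_le.mpr ⟨by linarith, by linarith⟩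

theorem two_mul_le_of_threshold_le {κf κH η₁ Lφ t : ℝ} (hκf : 0 ≤ κf) (hLφ : 0 ≤ Lφ)
    (hκH : κH ∈ Set.Ioc (0 : ℝ) 1) (hη₁ : η₁ < 1) (ht : (32 * κf / κH ^ 2 + Lφ) / (1 - η₁) ≤ t) :
    2 * κf ≤ (1 - η₁) * t := by
  obtain ⟨hκH₀, hκH₁⟩ := hκH
  have h32 : 32 * κf ≤ 32 * κf / κH ^ 2 :=
    le_div_self (by positivity) (by positivity) (pow_le_one₀ hκH₀.le hκH₁)
  have := (div_le_iff₀' (sub_pos.mpr hη₁)).mp ht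
  linarith

theorem div_sq_le_mul_div_of_le_mul_mul {c a b lam : ℝ} (hlam : 0 < lam)
    (h : c ≤ a * (lam * b)) : c / lam ^ 2 ≤ a * (b / lam) := by
  rw [div_le_iff₀ (by positivity)]
  calc c ≤ a * (lam * b) := h
    _ = a * (b / lam) * lam ^ 2 := by field_simp

theorem stmt_11_general (n : ℕ)
    (f : EuclideanSpace ℝ (Fin n) → ℝ)
    (x g : EuclideanSpace ℝ (Fin n))
    (lam θ Lφ κf κH η₁ η₂ εf fk fks : ℝ)
    (hlam : 0 < lam) (hLφ : 0 < Lφ) (hκf : 0 < κf)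
    (hκH : κH ∈ Set.Ioc (0 : ℝ) 1) (hη₁ : η₁ ∈ Set.Ioo (0 : ℝ) 1) (hη₂ : 0 < η₂)
    (hεf : εf ∈ Set.Ioc (0 : ℝ) κf)
    (s : EuclideanSpace ℝ (Fin n)) (hs : s = -(1 / (lam * ‖g‖)) • g)
    (D : ℝ) (hD : D = ‖g‖ / lam)
    (haccs : |f (x + s) - (fk + ⟪g, s⟫)| ≤ κf / lam ^ 2)
    (hest : |fks - f (x + s)| ≤ εf / lam ^ 2)
    (hbig : lam * ‖g‖ ≥
      max (max (Lφ + θ) η₂) ((32 * κf / κH ^ 2 + Lφ) / (1 - η₁))) :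
    g ≠ 0 ∧ |fk - fks - D| ≤ (1 - η₁) * D ∧ fk - fks ≥ η₁ * D ∧ lam * ‖g‖ ≥ η₂ := by
  rw [ge_iff_le, max_le_iff, max_le_iff] at hbig
  obtain ⟨⟨-, hη₂_le⟩, hthreshold⟩ := hbig
  have hg : g ≠ 0 := by
    rintro rfl
    simp only [norm_zero, mul_zero] at hη₂_le
    linarith
  have hinner : ⟪g, s⟫ = -D := by rw [hs, hD, inner_neg_smul_inv_mul_norm_self hg hlam.ne']
  rw [hinner, ← sub_eq_add_neg] at haccs
  have hclose : |fk - fks - D| ≤ (1 - η₁) * D :=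
    calc |fk - fks - D| ≤ εf / lam ^ 2 + κf / lam ^ 2 := abs_sub_sub_le_of_abs_sub_le haccs hest
      _ ≤ 2 * κf / lam ^ 2 := by rw [← add_div, two_mul]; gcongr; exact hεf.2
      _ ≤ (1 - η₁) * D := hD ▸ div_sq_le_mul_div_of_le_mul_mul hlam
          (two_mul_le_of_threshold_le hκf.le hLφ.le hκH hη₁.2 hthreshold)
  refine ⟨hg, hclose, ?_, hη₂_le⟩
  linarith [(abs_le.mp hclose).1]

/-- Successful fine iteration: if the model and the estimate
are accurate and `λ‖g‖` is large enough, then the acceptance ratio is close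
to one and the iteration is successful. -/
theorem stmt_11 (n : ℕ) (hn : 0 < n)
    (f : EuclideanSpace ℝ (Fin n) → ℝ)
    (x g : EuclideanSpace ℝ (Fin n))
    (lam θ Lφ κf κH η₁ η₂ εf fk fks : ℝ)
    (hlam : 0 < lam) (hθ : 0 < θ) (hLφ : 0 < Lφ) (hκf : 0 < κf)
    (hκH : κH ∈ Set.Ioc (0 : ℝ) 1) (hη₁ : η₁ ∈ Set.Ioo (0 : ℝ) 1) (hη₂ : 0 < η₂)
    (hεf : εf ∈ Set.Ioc (0 : ℝ) κf)
    (s : EuclideanSpace ℝ (Fin n)) (hs : s = -(1 / (lam * ‖g‖)) • g)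
    (D : ℝ) (hD : D = ‖g‖ / lam)
    (haccs : |f (x + s) - (fk + ⟪g, s⟫)| ≤ κf / lam ^ 2)
    (hest : |fks - f (x + s)| ≤ εf / lam ^ 2)
    (hbig : lam * ‖g‖ ≥
      max (max (Lφ + θ) η₂) ((32 * κf / κH ^ 2 + Lφ) / (1 - η₁))) :
    g ≠ 0 ∧ |fk - fks - D| ≤ (1 - η₁) * D ∧ fk - fks ≥ η₁ * D ∧ lam * ‖g‖ ≥ η₂ :=
  stmt_11_general n f x g lam θ Lφ κf κH η₁ η₂ εf fk fks hlam hLφ hκf hκH hη₁ hη₂ hεf s hs D hD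
    haccs hest hbig
end

section
/- Let f : ℝⁿ → ℝ, λ > 0, θ > 0, κ_f > 0, κ_H ∈ (0,1], η₁ ∈ (0,1), η₂ > 0, ε_f ∈ (0, κ_f], and f_k, f_k^s ∈ ℝ. Let s* ∈ ℝᵐ satisfy the stopping condition ‖∇φ̃(s*) + λ‖g‖·s*‖ ≤ θ‖s*‖ and the decrease condition φ̃(s*) − φ̃(0) ≤ −(λ‖g‖/2)‖s*‖², let the restriction condition ‖Rg‖ ≥ κ_H‖g‖ hold, and let s_k ∈ ℝⁿ satisfy the compatibility condition ⟨g, s_k⟩ = ⟨Rg, s*⟩. Set D = φ̃(0) − φ̃(s*) (the coarse model decrease). Assume |f(x + s_k) − (f_k + ⟨g, s_k⟩)| ≤ κ_f/λ², that |f_k^s − f(x + s_k)| ≤ ε_f/λ², and that λ‖g‖ ≥ max{L_φ + θ, η₂, (32κ_f/κ_H² + L_φ)/(1 − η₁)}. Then D > 0, |(f_k − f_k^s) − D| ≤ ((32κ_f/κ_H² + L_φ)/(λ‖g‖))·D ≤ (1 − η₁)·D, and in particular f_k − f_k^s ≥ η₁·D and λ‖g‖ ≥ η₂ (the iteration is successful).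 -/
/-!
Write `Λ = λ‖g‖`. The corrected model has gradient `Rg` at `0` and an `Lφ`-Lipschitz gradient, so
the stopping condition gives `‖Rg‖ ≤ (Lφ + θ + Λ)‖s*‖ ≤ 2Λ‖s*‖`, and together with the decrease
condition `D ≥ Λ‖s*‖²/2 ≥ ‖Rg‖²/(8Λ) ≥ κH²‖g‖/(8λ) > 0`. The actual reduction `fk - fks` differs
from `D` by the two `λ⁻²`-accurate errors and the Taylor remainder
`|φ̃(s*) - φ̃(0) - ⟪Rg, s*⟫| ≤ Lφ‖s*‖²/2 ≤ (Lφ/Λ) D`; the lower bound on `D` turns the `λ⁻²` errors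
into `(32κf/κH²)/Λ · D`.
-/

open RealInnerProductSpace

section

variable {F : Type*} [NormedAddCommGroup F] [InnerProductSpace ℝ F] [CompleteSpace F]

def IsCorrectedModel (φ : F → ℝ) (c v : F) (ψ : F → ℝ) : Prop :=
  ∀ s, ψ s = φ (c + s) + ⟪v, s⟫

namespace IsCorrectedModel

variable {φ ψ : F → ℝ} {c v : F}

theorem hasGradientAt (hψ : IsCorrectedModel φ c v ψ) (hφ : Differentiable ℝ φ) (s : F) :
    HasGradientAt ψ (gradient φ (c + s) + v) s := by
  rw [funext hψ, hasGradientAt_iff_hasFDerivAt, map_add, gradient,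
    LinearIsometryEquiv.apply_symm_apply]
  exact ((hφ _).hasFDerivAt.comp s ((hasFDerivAt_id s).const_add c)).add
    (innerSL ℝ v).hasFDerivAt

theorem gradient_eq (hψ : IsCorrectedModel φ c v ψ) (hφ : Differentiable ℝ φ) (s : F) :
    gradient ψ s = gradient φ (c + s) + v :=
  (hψ.hasGradientAt hφ s).gradient

theorem differentiable (hψ : IsCorrectedModel φ c v ψ) (hφ : Differentiable ℝ φ) :
    Differentiable ℝ ψ :=
  fun s => (hψ.hasGradientAt hφ s).differentiableAt

theorem norm_gradient_sub_le (hψ : IsCorrectedModel φ c v ψ) (hφ : Differentiable ℝ φ) {L : ℝ}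
    (hLip : ∀ a b, ‖gradient φ a - gradient φ b‖ ≤ L * ‖a - b‖) (a b : F) :
    ‖gradient ψ a - gradient ψ b‖ ≤ L * ‖a - b‖ := by
  simpa [hψ.gradient_eq hφ] using hLip (c + a) (c + b)

end IsCorrectedModel

theorem abs_sub_sub_inner_gradient_le {f : F → ℝ} (hf : Differentiable ℝ f) {L : ℝ}
    (hLip : ∀ a b, ‖gradient f a - gradient f b‖ ≤ L * ‖a - b‖) (a v : F) :
    |f (a + v) - f a - ⟪gradient f a, v⟫| ≤ L / 2 * ‖v‖ ^ 2 := by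
  set h : ℝ → ℝ := fun t => f (a + t • v) - f a - t * ⟪gradient f a, v⟫
  have hderiv (t : ℝ) : HasDerivAt h ⟪gradient f (a + t • v) - gradient f a, v⟫ t := by
    have hline : HasDerivAt (fun t : ℝ => a + t • v) v t := by
      simpa using ((hasDerivAt_id t).smul_const v).const_add a
    have := (((hf _).hasGradientAt.hasFDerivAt.comp_hasDerivAt t hline).sub_const (f a)).sub
      (hasDerivAt_mul_const ⟪gradient f a, v⟫)
    simpa [h, inner_sub_left, Pi.sub_def] using this
  have hbound : ∀ t ∈ Set.Ico (0 : ℝ) 1,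
      ‖⟪gradient f (a + t • v) - gradient f a, v⟫‖ ≤ L * t * ‖v‖ ^ 2 := by
    rintro t ⟨ht, -⟩
    calc ‖⟪gradient f (a + t • v) - gradient f a, v⟫‖
        ≤ ‖gradient f (a + t • v) - gradient f a‖ * ‖v‖ := norm_inner_le_norm _ _
      _ ≤ L * ‖t • v‖ * ‖v‖ := by
          gcongr
          simpa using hLip (a + t • v) a
      _ = L * t * ‖v‖ ^ 2 := by rw [norm_smul, Real.norm_of_nonneg ht]; ring
  have hquad (t : ℝ) : HasDerivAt (fun t : ℝ => L / 2 * t ^ 2 * ‖v‖ ^ 2) (L * t * ‖v‖ ^ 2) t := by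
    refine (((hasDerivAt_pow 2 t).const_mul (L / 2)).mul_const (‖v‖ ^ 2)).congr_deriv ?_
    push_cast
    ring
  have := image_norm_le_of_norm_deriv_right_le_deriv_boundary
    (fun t _ => (hderiv t).continuousAt.continuousWithinAt) (fun t _ => (hderiv t).hasDerivWithinAt)
    (by simp [h]) hquad hbound (Set.right_mem_Icc.mpr zero_le_one)
  simpa [h] using this

variable {ψ : F → ℝ} {L θ Λ : ℝ} {s : F}

theorem norm_gradient_zero_le_of_stop (hΛ : 0 ≤ Λ)
    (hLip : ∀ a b, ‖gradient ψ a - gradient ψ b‖ ≤ L * ‖a - b‖)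
    (hstop : ‖gradient ψ s + Λ • s‖ ≤ θ * ‖s‖) :
    ‖gradient ψ 0‖ ≤ (L + θ + Λ) * ‖s‖ := by
  have hLs := hLip 0 s
  rw [zero_sub, norm_neg] at hLs
  have hΛs : ‖Λ • s‖ = Λ * ‖s‖ := by rw [norm_smul, Real.norm_of_nonneg hΛ]
  calc ‖gradient ψ 0‖ = ‖(gradient ψ 0 - gradient ψ s) + (gradient ψ s + Λ • s) - Λ • s‖ := by
        congr 1; abel
    _ ≤ ‖gradient ψ 0 - gradient ψ s‖ + ‖gradient ψ s + Λ • s‖ + ‖Λ • s‖ :=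
        norm_sub_le_of_le (norm_add_le _ _) le_rfl
    _ ≤ (L + θ + Λ) * ‖s‖ := by linarith

theorem norm_gradient_zero_sq_le_of_stop_of_decrease (hΛ : 0 ≤ Λ)
    (hLip : ∀ a b, ‖gradient ψ a - gradient ψ b‖ ≤ L * ‖a - b‖) (hLθ : L + θ ≤ Λ)
    (hstop : ‖gradient ψ s + Λ • s‖ ≤ θ * ‖s‖) (hdecr : ψ s - ψ 0 ≤ -(Λ / 2) * ‖s‖ ^ 2) :
    ‖gradient ψ 0‖ ^ 2 ≤ 8 * Λ * (ψ 0 - ψ s) := by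
  have hgrad : ‖gradient ψ 0‖ ≤ 2 * Λ * ‖s‖ :=
    (norm_gradient_zero_le_of_stop hΛ hLip hstop).trans
      (mul_le_mul_of_nonneg_right (by linarith) (norm_nonneg s))
  calc ‖gradient ψ 0‖ ^ 2 ≤ (2 * Λ * ‖s‖) ^ 2 := pow_le_pow_left₀ (norm_nonneg _) hgrad 2
    _ = 4 * Λ * (Λ * ‖s‖ ^ 2) := by ring
    _ ≤ 4 * Λ * (2 * (ψ 0 - ψ s)) := by gcongr 4 * Λ * ?_; linarith
    _ = 8 * Λ * (ψ 0 - ψ s) := by ring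

theorem abs_sub_sub_inner_gradient_le_of_decrease (hψ : Differentiable ℝ ψ) (hL : 0 ≤ L)
    (hLip : ∀ a b, ‖gradient ψ a - gradient ψ b‖ ≤ L * ‖a - b‖) (hΛ : 0 < Λ)
    (hdecr : ψ s - ψ 0 ≤ -(Λ / 2) * ‖s‖ ^ 2) :
    |ψ s - ψ 0 - ⟪gradient ψ 0, s⟫| ≤ L / Λ * (ψ 0 - ψ s) := by
  have htaylor := abs_sub_sub_inner_gradient_le hψ hLip 0 s
  rw [zero_add] at htaylor
  calc |ψ s - ψ 0 - ⟪gradient ψ 0, s⟫| ≤ L / 2 * ‖s‖ ^ 2 := htaylor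
    _ = L / Λ * (Λ / 2 * ‖s‖ ^ 2) := by field_simp
    _ ≤ L / Λ * (ψ 0 - ψ s) := by gcongr; linarith

end

theorem stmt_12_general (n m : ℕ)
    (φ : EuclideanSpace ℝ (Fin m) → ℝ) (hφ : Differentiable ℝ φ)
    (Lφ : ℝ) (hLφ : 0 < Lφ)
    (hLip : ∀ a b : EuclideanSpace ℝ (Fin m),
      ‖gradient φ a - gradient φ b‖ ≤ Lφ * ‖a - b‖)
    (x g : EuclideanSpace ℝ (Fin n))
    (R : EuclideanSpace ℝ (Fin n) →ₗ[ℝ] EuclideanSpace ℝ (Fin m))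
    (φt : EuclideanSpace ℝ (Fin m) → ℝ)
    (hφt : ∀ s, φt s = φ (R x + s) + ⟪R g - gradient φ (R x), s⟫)
    (f : EuclideanSpace ℝ (Fin n) → ℝ)
    (lam θ κf κH η₁ η₂ εf fk fks : ℝ)
    (hlam : 0 < lam) (hκf : 0 < κf)
    (hκH : κH ∈ Set.Ioc (0 : ℝ) 1) (hη₁ : η₁ ∈ Set.Ioo (0 : ℝ) 1) (hη₂ : 0 < η₂)
    (hεf : εf ∈ Set.Ioc (0 : ℝ) κf)
    (sstar : EuclideanSpace ℝ (Fin m))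
    (hstop : ‖gradient φt sstar + (lam * ‖g‖) • sstar‖ ≤ θ * ‖sstar‖)
    (hdecr : φt sstar - φt 0 ≤ -(lam * ‖g‖ / 2) * ‖sstar‖ ^ 2)
    (hrestr : ‖R g‖ ≥ κH * ‖g‖)
    (sk : EuclideanSpace ℝ (Fin n))
    (hcompat : ⟪g, sk⟫ = ⟪R g, sstar⟫)
    (D : ℝ) (hD : D = φt 0 - φt sstar)
    (haccs : |f (x + sk) - (fk + ⟪g, sk⟫)| ≤ κf / lam ^ 2)
    (hest : |fks - f (x + sk)| ≤ εf / lam ^ 2)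
    (hbig : lam * ‖g‖ ≥
      max (max (Lφ + θ) η₂) ((32 * κf / κH ^ 2 + Lφ) / (1 - η₁))) :
    0 < D ∧ |fk - fks - D| ≤ (32 * κf / κH ^ 2 + Lφ) / (lam * ‖g‖) * D ∧
      (32 * κf / κH ^ 2 + Lφ) / (lam * ‖g‖) * D ≤ (1 - η₁) * D ∧
      fk - fks ≥ η₁ * D ∧ lam * ‖g‖ ≥ η₂ := by
  obtain ⟨⟨hLθ, hη₂Λ⟩, hratio⟩ : (Lφ + θ ≤ lam * ‖g‖ ∧ η₂ ≤ lam * ‖g‖) ∧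
      (32 * κf / κH ^ 2 + Lφ) / (1 - η₁) ≤ lam * ‖g‖ := by simpa only [max_le_iff] using hbig
  obtain ⟨hκH0, -⟩ := hκH
  have hΛ : 0 < lam * ‖g‖ := hη₂.trans_le hη₂Λ
  have hg : 0 < ‖g‖ := pos_of_mul_pos_right hΛ hlam.le
  have hmodel : IsCorrectedModel φ (R x) (R g - gradient φ (R x)) φt := hφt
  have hLipt := hmodel.norm_gradient_sub_le hφ hLip
  have hgrad0 : gradient φt 0 = R g := by rw [hmodel.gradient_eq hφ, add_zero]; abel
  have hcauchy := norm_gradient_zero_sq_le_of_stop_of_decrease hΛ.le hLipt hLθ hstop hdecr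
  have htaylor := abs_sub_sub_inner_gradient_le_of_decrease (hmodel.differentiable hφ) hLφ.le
    hLipt hΛ hdecr
  rw [hgrad0, ← hD] at hcauchy htaylor
  have hgD : κH ^ 2 * ‖g‖ ≤ 8 * lam * D := by
    have : (κH * ‖g‖) ^ 2 ≤ ‖R g‖ ^ 2 := pow_le_pow_left₀ (by positivity) hrestr 2
    nlinarith
  have hD0 : 0 < D := by
    have : 0 < 8 * lam * D := lt_of_lt_of_le (by positivity) hgD
    exact pos_of_mul_pos_right this (by positivity)
  have hκf_le : 2 * (κf / lam ^ 2) ≤ 32 * κf / κH ^ 2 / (lam * ‖g‖) * D := by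
    rw [← mul_div_assoc, div_div, div_mul_eq_mul_div,
      div_le_div_iff₀ (by positivity) (by positivity)]
    nlinarith [mul_le_mul_of_nonneg_left hgD (by positivity : 0 ≤ 2 * κf * lam),
      mul_pos (mul_pos hκf (pow_pos hlam 2)) hD0]
  have herr : |fk - fks - D| ≤ (32 * κf / κH ^ 2 + Lφ) / (lam * ‖g‖) * D := by
    have hsplit : fk - fks - D = -(f (x + sk) - (fk + ⟪g, sk⟫)) - (fks - f (x + sk))
        + (φt sstar - φt 0 - ⟪R g, sstar⟫) := by rw [hD, hcompat]; ring
    have hεκ : εf / lam ^ 2 ≤ κf / lam ^ 2 := by gcongr; exact hεf.2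
    rw [hsplit, add_div, add_mul]
    rw [abs_le] at haccs hest htaylor ⊢
    constructor <;> linarith [haccs.1, haccs.2, hest.1, hest.2, htaylor.1, htaylor.2]
  have hshrink : (32 * κf / κH ^ 2 + Lφ) / (lam * ‖g‖) * D ≤ (1 - η₁) * D :=
    mul_le_mul_of_nonneg_right ((div_le_comm₀ hΛ (sub_pos.mpr hη₁.2)).mpr hratio) hD0.le
  refine ⟨hD0, herr, hshrink, ?_, hη₂Λ⟩
  linarith [(abs_le.mp (herr.trans hshrink)).1]

/-- Successful coarse iteration: under the stopping, decrease,
restriction and compatibility conditions, accuracy of model and estimate, and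
a large enough `λ‖g‖`, the coarse model decrease `D = φ̃(0) − φ̃(s*)` is positive,
the acceptance ratio is close to one, and the iteration is successful. -/
theorem stmt_12 (n m : ℕ) (hn : 0 < n) (hm : 0 < m)
    (φ : EuclideanSpace ℝ (Fin m) → ℝ) (hφ : Differentiable ℝ φ)
    (Lφ : ℝ) (hLφ : 0 < Lφ)
    (hLip : ∀ a b : EuclideanSpace ℝ (Fin m),
      ‖gradient φ a - gradient φ b‖ ≤ Lφ * ‖a - b‖)
    (x g : EuclideanSpace ℝ (Fin n))
    (R : EuclideanSpace ℝ (Fin n) →ₗ[ℝ] EuclideanSpace ℝ (Fin m))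
    (φt : EuclideanSpace ℝ (Fin m) → ℝ)
    (hφt : ∀ s, φt s = φ (R x + s) + ⟪R g - gradient φ (R x), s⟫)
    (f : EuclideanSpace ℝ (Fin n) → ℝ)
    (lam θ κf κH η₁ η₂ εf fk fks : ℝ)
    (hlam : 0 < lam) (hθ : 0 < θ) (hκf : 0 < κf)
    (hκH : κH ∈ Set.Ioc (0 : ℝ) 1) (hη₁ : η₁ ∈ Set.Ioo (0 : ℝ) 1) (hη₂ : 0 < η₂)
    (hεf : εf ∈ Set.Ioc (0 : ℝ) κf)
    (sstar : EuclideanSpace ℝ (Fin m))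
    (hstop : ‖gradient φt sstar + (lam * ‖g‖) • sstar‖ ≤ θ * ‖sstar‖)
    (hdecr : φt sstar - φt 0 ≤ -(lam * ‖g‖ / 2) * ‖sstar‖ ^ 2)
    (hrestr : ‖R g‖ ≥ κH * ‖g‖)
    (sk : EuclideanSpace ℝ (Fin n))
    (hcompat : ⟪g, sk⟫ = ⟪R g, sstar⟫)
    (D : ℝ) (hD : D = φt 0 - φt sstar)
    (haccs : |f (x + sk) - (fk + ⟪g, sk⟫)| ≤ κf / lam ^ 2)
    (hest : |fks - f (x + sk)| ≤ εf / lam ^ 2)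
    (hbig : lam * ‖g‖ ≥
      max (max (Lφ + θ) η₂) ((32 * κf / κH ^ 2 + Lφ) / (1 - η₁))) :
    0 < D ∧ |fk - fks - D| ≤ (32 * κf / κH ^ 2 + Lφ) / (lam * ‖g‖) * D ∧
      (32 * κf / κH ^ 2 + Lφ) / (lam * ‖g‖) * D ≤ (1 - η₁) * D ∧
      fk - fks ≥ η₁ * D ∧ lam * ‖g‖ ≥ η₂ :=
  stmt_12_general n m φ hφ Lφ hLφ hLip x g R φt hφt f lam θ κf κH η₁ η₂ εf fk fks hlam hκf hκH hη₁
    hη₂ hεf sstar hstop hdecr hrestr sk hcompat D hD haccs hest hbig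
end

section
/- Let λ > 0, θ > 0 and κ_H ∈ (0,1]. Suppose s* ∈ ℝᵐ satisfies the stopping condition ‖∇φ̃(s*) + λ‖g‖·s*‖ ≤ θ‖s*‖ and the decrease condition φ̃(s*) − φ̃(0) ≤ −(λ‖g‖/2)‖s*‖², that the restriction condition ‖Rg‖ ≥ κ_H‖g‖ holds, and that λ‖g‖ ≥ L_φ + θ. Then the coarse model decrease satisfies φ̃(0) − φ̃(s*) ≥ (κ_H²/8)·‖g‖/λ. -/
open RealInnerProductSpace

/-!
The gradient of `φ̃` is that of `φ` translated by `Rx` plus a constant, so it is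
`L_φ`-Lipschitz with `∇φ̃(0) = Rg`. Comparing `∇φ̃(0)` with `∇φ̃(s*)` and using the stopping
condition gives `κ_H‖g‖ ≤ ‖Rg‖ ≤ (L_φ + θ + λ‖g‖)‖s*‖ ≤ 2λ‖g‖‖s*‖`, so `‖s*‖ ≥ κ_H / (2λ)`
unless `g = 0`; the decrease condition then yields at least `(λ‖g‖/2)(κ_H/(2λ))² = (κ_H²/8)‖g‖/λ`.
-/

theorem hasGradientAt_comp_const_add_add_inner {E : Type*} [NormedAddCommGroup E]
    [InnerProductSpace ℝ E] [CompleteSpace E] {f : E → ℝ} {a s : E} (c : E)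
    (hf : DifferentiableAt ℝ f (a + s)) :
    HasGradientAt (fun t ↦ f (a + t) + ⟪c, t⟫) (gradient f (a + s) + c) s := by
  rw [hasGradientAt_iff_hasFDerivAt, map_add]
  have hshift : HasFDerivAt (fun t ↦ f (a + t))
      (InnerProductSpace.toDual ℝ E (gradient f (a + s))) s := by
    rw [toDual_gradient, hasFDerivAt_comp_add_left]
    exact hf.hasFDerivAt
  exact hshift.add (InnerProductSpace.toDual ℝ E c).hasFDerivAt

theorem norm_apply_zero_le_of_norm_add_smul_le {E : Type*} [NormedAddCommGroup E]
    [NormedSpace ℝ E] {G : E → E} {L θ μ : ℝ} {s : E}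
    (hG : ‖G 0 - G s‖ ≤ L * ‖s‖) (hμ : 0 ≤ μ) (hstop : ‖G s + μ • s‖ ≤ θ * ‖s‖) :
    ‖G 0‖ ≤ (L + θ + μ) * ‖s‖ :=
  calc ‖G 0‖ = ‖(G 0 - G s) + (G s + μ • s) - μ • s‖ := by congr 1; abel
    _ ≤ ‖G 0 - G s‖ + ‖G s + μ • s‖ + ‖μ • s‖ := norm_sub_le_of_le (norm_add_le _ _) le_rfl
    _ ≤ L * ‖s‖ + θ * ‖s‖ + μ * ‖s‖ := by
      rw [norm_smul, Real.norm_of_nonneg hμ]; gcongr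
    _ = (L + θ + μ) * ‖s‖ := by ring

theorem sq_mul_div_le_of_mul_le_mul {κ γ lam r : ℝ} (hκ : 0 ≤ κ) (hγ : 0 ≤ γ) (hlam : 0 < lam)
    (h : κ * γ ≤ 2 * (lam * γ) * r) :
    κ ^ 2 / 8 * (γ / lam) ≤ lam * γ / 2 * r ^ 2 := by
  rcases hγ.eq_or_lt with rfl | hγ
  · simp
  have hκr : κ ≤ 2 * lam * r := le_of_mul_le_mul_right (by linarith) hγ
  calc κ ^ 2 / 8 * (γ / lam) ≤ (2 * lam * r) ^ 2 / 8 * (γ / lam) := by gcongr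
    _ = lam * γ / 2 * r ^ 2 := by field_simp; ring

theorem stmt_13_general (n m : ℕ)
    (φ : EuclideanSpace ℝ (Fin m) → ℝ) (hφ : Differentiable ℝ φ)
    (Lφ : ℝ)
    (hLip : ∀ a b : EuclideanSpace ℝ (Fin m),
      ‖gradient φ a - gradient φ b‖ ≤ Lφ * ‖a - b‖)
    (x g : EuclideanSpace ℝ (Fin n))
    (R : EuclideanSpace ℝ (Fin n) →ₗ[ℝ] EuclideanSpace ℝ (Fin m))
    (φt : EuclideanSpace ℝ (Fin m) → ℝ)
    (hφt : ∀ s, φt s = φ (R x + s) + ⟪R g - gradient φ (R x), s⟫)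
    (lam θ κH : ℝ) (hlam : 0 < lam)
    (hκH : κH ∈ Set.Ioc (0 : ℝ) 1)
    (sstar : EuclideanSpace ℝ (Fin m))
    (hstop : ‖gradient φt sstar + (lam * ‖g‖) • sstar‖ ≤ θ * ‖sstar‖)
    (hdecr : φt sstar - φt 0 ≤ -(lam * ‖g‖ / 2) * ‖sstar‖ ^ 2)
    (hrestr : ‖R g‖ ≥ κH * ‖g‖)
    (hbig : lam * ‖g‖ ≥ Lφ + θ) :
    φt 0 - φt sstar ≥ κH ^ 2 / 8 * (‖g‖ / lam) := by
  have hgrad (s) : gradient φt s = gradient φ (R x + s) + (R g - gradient φ (R x)) := by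
    rw [funext hφt]
    exact (hasGradientAt_comp_const_add_add_inner _ (hφ _)).gradient
  have hgrad_zero : gradient φt 0 = R g := by simp [hgrad]
  have hgrad_lip : ‖gradient φt 0 - gradient φt sstar‖ ≤ Lφ * ‖sstar‖ := by
    rw [hgrad, hgrad, add_sub_add_right_eq_sub]
    simpa using hLip (R x + 0) (R x + sstar)
  have hRg : ‖R g‖ ≤ 2 * (lam * ‖g‖) * ‖sstar‖ := by
    rw [← hgrad_zero]
    refine (norm_apply_zero_le_of_norm_add_smul_le hgrad_lip (by positivity) hstop).trans ?_
    gcongr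
    linarith
  have hbound := sq_mul_div_le_of_mul_le_mul hκH.1.le (norm_nonneg g) hlam (hrestr.trans hRg)
  linarith

/-- Lower bound on the coarse model decrease:
`φ̃(0) − φ̃(s*) ≥ (κ_H²/8)‖g‖/λ`. -/
theorem stmt_13 (n m : ℕ) (hn : 0 < n) (hm : 0 < m)
    (φ : EuclideanSpace ℝ (Fin m) → ℝ) (hφ : Differentiable ℝ φ)
    (Lφ : ℝ) (hLφ : 0 < Lφ)
    (hLip : ∀ a b : EuclideanSpace ℝ (Fin m),
      ‖gradient φ a - gradient φ b‖ ≤ Lφ * ‖a - b‖)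
    (x g : EuclideanSpace ℝ (Fin n))
    (R : EuclideanSpace ℝ (Fin n) →ₗ[ℝ] EuclideanSpace ℝ (Fin m))
    (φt : EuclideanSpace ℝ (Fin m) → ℝ)
    (hφt : ∀ s, φt s = φ (R x + s) + ⟪R g - gradient φ (R x), s⟫)
    (lam θ κH : ℝ) (hlam : 0 < lam) (hθ : 0 < θ)
    (hκH : κH ∈ Set.Ioc (0 : ℝ) 1)
    (sstar : EuclideanSpace ℝ (Fin m))
    (hstop : ‖gradient φt sstar + (lam * ‖g‖) • sstar‖ ≤ θ * ‖sstar‖)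
    (hdecr : φt sstar - φt 0 ≤ -(lam * ‖g‖ / 2) * ‖sstar‖ ^ 2)
    (hrestr : ‖R g‖ ≥ κH * ‖g‖)
    (hbig : lam * ‖g‖ ≥ Lφ + θ) :
    φt 0 - φt sstar ≥ κH ^ 2 / 8 * (‖g‖ / lam) :=
  stmt_13_general n m φ hφ Lφ hLip x g R φt hφt lam θ κH hlam hκH sstar hstop hdecr hrestr hbig
end

section
/- Let f : ℝⁿ → ℝ, x, s ∈ ℝⁿ, g ∈ ℝⁿ, λ > 0, η₁ ∈ (0,1), η₂ > 0 and ε_f > 0 with ε_f < η₁η₂/2, and let f_k, f_k^s ∈ ℝ. Assume the estimates are ε_f-accurate, i.e. |f_k − f(x)| ≤ ε_f/λ² and |f_k^s − f(x + s)| ≤ ε_f/λ², that the fine-step acceptance test holds, i.e. f_k − f_k^s ≥ η₁·‖g‖/λ, and that λ‖g‖ ≥ η₂. Then f(x + s) − f(x) ≤ −(η₁η₂ − 2ε_f)/λ² < 0. -/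
open RealInnerProductSpace

/-! Both function values are known up to `ε_f/λ²`, so the true decrease `f(x) − f(x+s)` is at
least the estimated one minus `2ε_f/λ²`; the acceptance test and `λ‖g‖ ≥ η₂` bound the estimated
decrease below by `η₁η₂/λ²`, which beats `2ε_f/λ²` because `ε_f < η₁η₂/2`. -/

theorem sub_le_of_abs_sub_le_of_le_sub {α : Type*} [Field α] [LinearOrder α]
    [IsStrictOrderedRing α] {a b A B e d : α} (ha : |a - A| ≤ e) (hb : |b - B| ≤ e)
    (hd : d ≤ a - b) : B - A ≤ 2 * e - d := by
  linarith [(abs_le.mp ha).2, (abs_le.mp hb).1]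

theorem mul_div_sq_le_mul_div {α : Type*} [Field α] [LinearOrder α] [IsStrictOrderedRing α]
    {c lam t η : α} (hc : 0 ≤ c) (hlam : 0 < lam) (hη : η ≤ lam * t) :
    c * η / lam ^ 2 ≤ c * (t / lam) := by
  have hsq : η / lam ^ 2 ≤ t / lam := by
    calc η / lam ^ 2 ≤ lam * t / lam ^ 2 := by gcongr
      _ = t / lam := by field_simp
  simpa only [mul_div_assoc] using mul_le_mul_of_nonneg_left hsq hc

theorem stmt_14_general (n : ℕ)
    (f : EuclideanSpace ℝ (Fin n) → ℝ)
    (x s g : EuclideanSpace ℝ (Fin n))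
    (lam η₁ η₂ εf fk fks : ℝ)
    (hlam : 0 < lam) (hη₁ : η₁ ∈ Set.Ioo (0 : ℝ) 1)
    (hεfsmall : εf < η₁ * η₂ / 2)
    (hest0 : |fk - f x| ≤ εf / lam ^ 2)
    (hests : |fks - f (x + s)| ≤ εf / lam ^ 2)
    (haccept : fk - fks ≥ η₁ * (‖g‖ / lam))
    (hbig : lam * ‖g‖ ≥ η₂) :
    f (x + s) - f x ≤ -((η₁ * η₂ - 2 * εf) / lam ^ 2) ∧
      -((η₁ * η₂ - 2 * εf) / lam ^ 2) < 0 := by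
  have hmodel : η₁ * η₂ / lam ^ 2 ≤ fk - fks :=
    (mul_div_sq_le_mul_div hη₁.1.le hlam hbig).trans haccept
  refine ⟨?_, neg_neg_of_pos (div_pos (by linarith) (by positivity))⟩
  calc f (x + s) - f x ≤ 2 * (εf / lam ^ 2) - η₁ * η₂ / lam ^ 2 :=
        sub_le_of_abs_sub_le_of_le_sub hest0 hests hmodel
    _ = -((η₁ * η₂ - 2 * εf) / lam ^ 2) := by ring

/-- True decrease on a successful fine iteration:
with `ε_f`-accurate estimates and the fine-step acceptance test,
`f(x+s) − f(x) ≤ −(η₁η₂ − 2ε_f)/λ² < 0`. -/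
theorem stmt_14 (n : ℕ) (hn : 0 < n)
    (f : EuclideanSpace ℝ (Fin n) → ℝ)
    (x s g : EuclideanSpace ℝ (Fin n))
    (lam η₁ η₂ εf fk fks : ℝ)
    (hlam : 0 < lam) (hη₁ : η₁ ∈ Set.Ioo (0 : ℝ) 1) (hη₂ : 0 < η₂)
    (hεf : 0 < εf) (hεfsmall : εf < η₁ * η₂ / 2)
    (hest0 : |fk - f x| ≤ εf / lam ^ 2)
    (hests : |fks - f (x + s)| ≤ εf / lam ^ 2)
    (haccept : fk - fks ≥ η₁ * (‖g‖ / lam))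
    (hbig : lam * ‖g‖ ≥ η₂) :
    f (x + s) - f x ≤ -((η₁ * η₂ - 2 * εf) / lam ^ 2) ∧
      -((η₁ * η₂ - 2 * εf) / lam ^ 2) < 0 :=
  stmt_14_general n f x s g lam η₁ η₂ εf fk fks hlam hη₁ hεfsmall hest0 hests haccept hbig
end

section
/- Let f : ℝⁿ → ℝ, λ > 0, θ > 0, κ_H ∈ (0,1], η₁ ∈ (0,1), η₂ > 0 and ε_f > 0 with ε_f < η₁η₂κ_H²/16, and let f_k, f_k^s ∈ ℝ. Let s* ∈ ℝᵐ satisfy the stopping condition ‖∇φ̃(s*) + λ‖g‖·s*‖ ≤ θ‖s*‖ and the decrease condition φ̃(s*) − φ̃(0) ≤ −(λ‖g‖/2)‖s*‖², let the restriction condition ‖Rg‖ ≥ κ_H‖g‖ hold, and let s_k ∈ ℝⁿ. Assume the estimates are ε_f-accurate, i.e. |f_k − f(x)| ≤ ε_f/λ² and |f_k^s − f(x + s_k)| ≤ ε_f/λ², that the coarse-step acceptance test holds, i.e. f_k − f_k^s ≥ η₁·(φ̃(0) − φ̃(s*)), and that λ‖g‖ ≥ max{L_φ + θ, η₂}. Then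 f(x + s_k) − f(x) ≤ −(η₁η₂κ_H²/8 − 2ε_f)/λ² < 0. -/
open RealInnerProductSpace InnerProductSpace

/-!
The stopping test together with the Lipschitz bound on `∇φ` gives
`‖R g‖ = ‖∇φ̃(0)‖ ≤ (L_φ + θ + λ‖g‖)‖s*‖ ≤ 2λ‖g‖‖s*‖`, so the restriction condition forces
`‖s*‖ ≥ κ_H / (2λ)`. The sufficient-decrease condition then bounds the model decrease below by
`η₂κ_H²/(8λ²)`, the acceptance test transfers a fraction `η₁` of it to the estimates, and
`ε_f`-accuracy costs at most `2ε_f/λ²` in passing from the estimates to `f`.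
-/

section CorrectedModel

variable {E : Type*} [NormedAddCommGroup E] [InnerProductSpace ℝ E] [CompleteSpace E]

theorem hasGradientAt_comp_const_add_add_inner_s15 {φ : E → ℝ} {v c s : E}
    (hφ : DifferentiableAt ℝ φ (v + s)) :
    HasGradientAt (fun t => φ (v + t) + ⟪c, t⟫) (gradient φ (v + s) + c) s := by
  rw [hasGradientAt_iff_hasFDerivAt, map_add, toDual_gradient]
  exact (hφ.hasFDerivAt.comp s ((hasFDerivAt_id s).const_add v)).add (innerSL ℝ c).hasFDerivAt

theorem gradient_comp_const_add_add_inner {φ : E → ℝ} {v c s : E}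
    (hφ : DifferentiableAt ℝ φ (v + s)) :
    gradient (fun t => φ (v + t) + ⟪c, t⟫) s = gradient φ (v + s) + c :=
  (hasGradientAt_comp_const_add_add_inner_s15 hφ).gradient

end CorrectedModel

theorem norm_le_two_mul_of_lipschitz_of_stop {E : Type*} [SeminormedAddCommGroup E]
    [NormedSpace ℝ E] {a b s : E} {L θ μ : ℝ} (hμ : 0 ≤ μ) (hab : ‖a - b‖ ≤ L * ‖s‖)
    (hb : ‖b + μ • s‖ ≤ θ * ‖s‖) (hLθ : L + θ ≤ μ) : ‖a‖ ≤ 2 * μ * ‖s‖ :=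
  calc ‖a‖ = ‖(a - b) + (b + μ • s) - μ • s‖ := by congr 1; abel
    _ ≤ ‖a - b‖ + ‖b + μ • s‖ + ‖μ • s‖ := norm_sub_le_of_le (norm_add_le _ _) le_rfl
    _ ≤ (L + θ) * ‖s‖ + μ * ‖s‖ := by rw [norm_smul_of_nonneg hμ]; linarith
    _ ≤ 2 * μ * ‖s‖ := by nlinarith [norm_nonneg s]

theorem le_of_restriction_of_decrease {lam ν r κ η d : ℝ} (hlam : 0 < lam) (hν : 0 < ν)
    (hκ : 0 ≤ κ) (hην : η ≤ lam * ν) (hr : κ * ν ≤ 2 * (lam * ν) * r)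
    (hd : lam * ν / 2 * r ^ 2 ≤ d) : η * κ ^ 2 / (8 * lam ^ 2) ≤ d := by
  have hκr : κ ≤ 2 * lam * r := le_of_mul_le_mul_right (by linarith) hν
  calc η * κ ^ 2 / (8 * lam ^ 2) ≤ lam * ν * (2 * lam * r) ^ 2 / (8 * lam ^ 2) := by
        gcongr
    _ = lam * ν / 2 * r ^ 2 := by field_simp; ring
    _ ≤ d := hd

theorem stmt_15_general (n m : ℕ)
    (φ : EuclideanSpace ℝ (Fin m) → ℝ) (hφ : Differentiable ℝ φ)
    (Lφ : ℝ)
    (hLip : ∀ a b : EuclideanSpace ℝ (Fin m),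
      ‖gradient φ a - gradient φ b‖ ≤ Lφ * ‖a - b‖)
    (x g : EuclideanSpace ℝ (Fin n))
    (R : EuclideanSpace ℝ (Fin n) →ₗ[ℝ] EuclideanSpace ℝ (Fin m))
    (φt : EuclideanSpace ℝ (Fin m) → ℝ)
    (hφt : ∀ s, φt s = φ (R x + s) + ⟪R g - gradient φ (R x), s⟫)
    (f : EuclideanSpace ℝ (Fin n) → ℝ)
    (lam θ κH η₁ η₂ εf fk fks : ℝ)
    (hκH : κH ∈ Set.Ioc (0 : ℝ) 1) (hη₁ : η₁ ∈ Set.Ioo (0 : ℝ) 1) (hη₂ : 0 < η₂)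
    (hεfsmall : εf < η₁ * η₂ * κH ^ 2 / 16)
    (sstar : EuclideanSpace ℝ (Fin m))
    (hstop : ‖gradient φt sstar + (lam * ‖g‖) • sstar‖ ≤ θ * ‖sstar‖)
    (hdecr : φt sstar - φt 0 ≤ -(lam * ‖g‖ / 2) * ‖sstar‖ ^ 2)
    (hrestr : ‖R g‖ ≥ κH * ‖g‖)
    (sk : EuclideanSpace ℝ (Fin n))
    (hest0 : |fk - f x| ≤ εf / lam ^ 2)
    (hests : |fks - f (x + sk)| ≤ εf / lam ^ 2)
    (haccept : fk - fks ≥ η₁ * (φt 0 - φt sstar))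
    (hbig : lam * ‖g‖ ≥ max (Lφ + θ) η₂) :
    f (x + sk) - f x ≤ -((η₁ * η₂ * κH ^ 2 / 8 - 2 * εf) / lam ^ 2) ∧
      -((η₁ * η₂ * κH ^ 2 / 8 - 2 * εf) / lam ^ 2) < 0 := by
  have hμ : 0 < lam * ‖g‖ := hη₂.trans_le ((le_max_right _ _).trans hbig)
  have hlam : 0 < lam := pos_of_mul_pos_left hμ (norm_nonneg g)
  have hgrad : ∀ s, gradient φt s = gradient φ (R x + s) + (R g - gradient φ (R x)) := by
    intro s
    rw [funext hφt]
    exact gradient_comp_const_add_add_inner (hφ _)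
  have hRg : ‖R g‖ ≤ 2 * (lam * ‖g‖) * ‖sstar‖ := by
    refine norm_le_two_mul_of_lipschitz_of_stop hμ.le ?_ hstop ((le_max_left _ _).trans hbig)
    calc ‖R g - gradient φt sstar‖ = ‖gradient φ (R x) - gradient φ (R x + sstar)‖ := by
          rw [hgrad]; congr 1; abel
      _ ≤ Lφ * ‖sstar‖ := by simpa using hLip (R x) (R x + sstar)
  have hmodel : η₂ * κH ^ 2 / (8 * lam ^ 2) ≤ φt 0 - φt sstar :=
    le_of_restriction_of_decrease hlam (pos_of_mul_pos_right hμ hlam.le) hκH.1.le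
      ((le_max_right _ _).trans hbig) (hrestr.trans hRg) (by linarith)
  have hηmodel := mul_le_mul_of_nonneg_left hmodel hη₁.1.le
  refine ⟨?_, neg_neg_of_pos (div_pos (by linarith) (by positivity))⟩
  calc f (x + sk) - f x ≤ -(fk - fks) + 2 * (εf / lam ^ 2) := by
        linarith [abs_le.mp hest0, abs_le.mp hests]
    _ ≤ -(η₁ * (η₂ * κH ^ 2 / (8 * lam ^ 2))) + 2 * (εf / lam ^ 2) := by linarith
    _ = -((η₁ * η₂ * κH ^ 2 / 8 - 2 * εf) / lam ^ 2) := by field_simp; ring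

/-- True decrease on a successful coarse iteration:
with `ε_f`-accurate estimates and the coarse-step acceptance test,
`f(x+s_k) − f(x) ≤ −(η₁η₂κ_H²/8 − 2ε_f)/λ² < 0`. -/
theorem stmt_15 (n m : ℕ) (hn : 0 < n) (hm : 0 < m)
    (φ : EuclideanSpace ℝ (Fin m) → ℝ) (hφ : Differentiable ℝ φ)
    (Lφ : ℝ) (hLφ : 0 < Lφ)
    (hLip : ∀ a b : EuclideanSpace ℝ (Fin m),
      ‖gradient φ a - gradient φ b‖ ≤ Lφ * ‖a - b‖)
    (x g : EuclideanSpace ℝ (Fin n))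
    (R : EuclideanSpace ℝ (Fin n) →ₗ[ℝ] EuclideanSpace ℝ (Fin m))
    (φt : EuclideanSpace ℝ (Fin m) → ℝ)
    (hφt : ∀ s, φt s = φ (R x + s) + ⟪R g - gradient φ (R x), s⟫)
    (f : EuclideanSpace ℝ (Fin n) → ℝ)
    (lam θ κH η₁ η₂ εf fk fks : ℝ)
    (hlam : 0 < lam) (hθ : 0 < θ)
    (hκH : κH ∈ Set.Ioc (0 : ℝ) 1) (hη₁ : η₁ ∈ Set.Ioo (0 : ℝ) 1) (hη₂ : 0 < η₂)
    (hεf : 0 < εf) (hεfsmall : εf < η₁ * η₂ * κH ^ 2 / 16)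
    (sstar : EuclideanSpace ℝ (Fin m))
    (hstop : ‖gradient φt sstar + (lam * ‖g‖) • sstar‖ ≤ θ * ‖sstar‖)
    (hdecr : φt sstar - φt 0 ≤ -(lam * ‖g‖ / 2) * ‖sstar‖ ^ 2)
    (hrestr : ‖R g‖ ≥ κH * ‖g‖)
    (sk : EuclideanSpace ℝ (Fin n))
    (hest0 : |fk - f x| ≤ εf / lam ^ 2)
    (hests : |fks - f (x + sk)| ≤ εf / lam ^ 2)
    (haccept : fk - fks ≥ η₁ * (φt 0 - φt sstar))
    (hbig : lam * ‖g‖ ≥ max (Lφ + θ) η₂) :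
    f (x + sk) - f x ≤ -((η₁ * η₂ * κH ^ 2 / 8 - 2 * εf) / lam ^ 2) ∧
      -((η₁ * η₂ * κH ^ 2 / 8 - 2 * εf) / lam ^ 2) < 0 :=
  stmt_15_general n m φ hφ Lφ hLip x g R φt hφt f lam θ κH η₁ η₂ εf fk fks hκH hη₁ hη₂ hεfsmall
    sstar hstop hdecr hrestr sk hest0 hests haccept hbig
end
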